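/- arXiv:1808.09544 — 6 statements merged into one kernel-verified Lean document; each statement's English description precedes it below -/
import Mathlib

section
/- Let p be an odd prime, k a finite field with #k = p^f, and n > 1 an odd integer dividing p^f − 1. Let a ∈ k^× have multiplicative order exactly n, set V = k², let D := diag(a, a⁻¹) and S := the matrix with rows (0,1),(1,0) in GL_2(k), let C be the cyclic subgroup generated by D and H the subgroup generated by D and S (so H is dihedral of order 2n). Then the following are equivalent: (i) there exists a nonzero 𝔽_p-linear map f : M_2(k) → k² with f(gAg⁻¹) = g f(A) for all g ∈ C; (ii) there exists a nonzero 𝔽_p-linear map f : M_2(k) → k² with f(gAg⁻¹) = g f(A) for all g ∈ H; (iii) there exist ε ∈ {1,−1} and i ∈ ℕ with p^i ≡ 2ε (mod n); (iv) there exist ε ∈ {1,−1} and i ∈ ℕ with p^i ≡ 2ε (mod n) and n divides (2ε)^f − 1. -/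
/-!
Conjugation by `D = diag(a, a⁻¹)` scales the entry `(i, j)` of a matrix by `a ^ (wᵢ - wⱼ)` and
the coordinate `t` of `k²` by `a ^ wₜ`, where `w = (1, -1)`. So a nonzero additive equivariant map
has a nonzero component `ψ : k → k` with `ψ (a ^ (wᵢ - wⱼ) * x) = a ^ wₜ * ψ x`. Such a `ψ` is
`𝔽_p`-linear, so it intertwines `q(b)` and `q(c)` for every `q ∈ 𝔽_p[X]`; applied to the minimal
polynomial of `b` this makes `c` a Galois conjugate of `b`, i.e. `b = c ^ p ^ m`. For `i = j` this
would give `a = 1`; otherwise it reads `p ^ m ≡ ±2 (mod n)`. Conversely, if `a ^ p ^ m = a ^ (2ε)`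
then applying the inverse of `x ↦ x ^ p ^ m` to the two off-diagonal entries gives a map that is
equivariant under `D` and under the swap `S`. Finally `p ^ f ≡ 1 (mod n)` turns `p ^ m ≡ 2ε` into
`(2ε) ^ f ≡ 1`.
-/

open Polynomial

theorem FiniteField.exists_apply_eq_pow_card_pow {K L : Type*} [Field K] [Fintype K] [Field L]
    [Finite L] [Algebra K L] (σ : L ≃ₐ[K] L) : ∃ i : ℕ, ∀ x, σ x = x ^ Fintype.card K ^ i := by
  obtain ⟨⟨i, _⟩, rfl⟩ := (bijective_frobeniusAlgEquivOfAlgebraic_pow K L).2 σ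
  exact ⟨i, fun x => by rw [AlgEquiv.coe_pow, coe_frobeniusAlgEquivOfAlgebraic_iterate]⟩

theorem map_aeval_mul_of_map_mul {K L : Type*} [Field K] [Field L] [Algebra K L]
    (ψ : L →ₗ[K] L) {b c : L} (h : ∀ x, ψ (b * x) = c * ψ x) (q : K[X]) (x : L) :
    ψ (aeval b q * x) = aeval c q * ψ x := by
  induction q using Polynomial.induction_on generalizing x with
  | C r => simp only [aeval_C, ← Algebra.smul_def, map_smul]
  | add q r hq hr => simp only [map_add, add_mul, hq, hr]
  | monomial m r ih =>
    rw [pow_succ, ← mul_assoc, map_mul (aeval b), aeval_X, mul_assoc, ih, h,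
      map_mul (aeval c) _ X, aeval_X]
    ring

theorem exists_algEquiv_apply_eq_of_map_mul {K L : Type*} [Field K] [Field L] [Algebra K L]
    [Normal K L] (ψ : L →ₗ[K] L) (hψ : ψ ≠ 0) {b c : L} (h : ∀ x, ψ (b * x) = c * ψ x) :
    ∃ σ : L ≃ₐ[K] L, σ c = b := by
  obtain ⟨x, hx⟩ := DFunLike.ne_iff.mp hψ
  refine minpoly.exists_algEquiv_of_root (Algebra.IsAlgebraic.isAlgebraic b) ?_
  have := map_aeval_mul_of_map_mul ψ h (minpoly K b) x
  rw [minpoly.aeval, zero_mul, map_zero] at this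
  exact (mul_eq_zero.mp this.symm).resolve_right hx

namespace Matrix

theorem exists_map_single_apply_ne_zero {n R M : Type*} [Fintype n] [DecidableEq n]
    [AddCommMonoid R] [AddCommMonoid M]
    (φ : Matrix n n R →+ (n → M)) {A : Matrix n n R} (hA : φ A ≠ 0) :
    ∃ i j t x, φ (single i j x) t ≠ 0 := by
  by_contra! h
  exact hA (by rw [matrix_eq_sum_single A, map_sum]; ext t; simp [h])

variable {n R : Type*} [Fintype n] [DecidableEq n] [CommSemiring R]

def conjEquivariantSubgroup (φ : Matrix n n R → n → R) : Subgroup (Matrix n n R)ˣ where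
  carrier := {g | ∀ A, φ (g * A * (↑g⁻¹ : Matrix n n R)) = (g : Matrix n n R) *ᵥ φ A}
  one_mem' A := by simp
  mul_mem' {g h} hg hh A := by
    have hconj : ((g * h : (Matrix n n R)ˣ) : Matrix n n R) * A * (↑(g * h)⁻¹ : Matrix n n R) =
        g * (h * A * (↑h⁻¹ : Matrix n n R)) * (↑g⁻¹ : Matrix n n R) := by
      simp [mul_assoc]
    rw [hconj, hg, hh, Units.val_mul, mulVec_mulVec]
  inv_mem' {g} hg A := by
    have hconj : (g : Matrix n n R) * ((↑g⁻¹ : Matrix n n R) * A * g) * (↑g⁻¹ : Matrix n n R) =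
        A := by
      simp [mul_assoc]
    have := hg ((↑g⁻¹ : Matrix n n R) * A * g)
    rw [hconj] at this
    rw [inv_inv, this, mulVec_mulVec, Units.inv_mul, one_mulVec]

section Diagonal

variable {d : n → Rˣ} {g : (Matrix n n R)ˣ}

theorem val_inv_eq_diagonal (hg : (g : Matrix n n R) = diagonal fun i => (d i : R)) :
    (↑g⁻¹ : Matrix n n R) = diagonal fun i => (↑(d i)⁻¹ : R) :=
  Units.inv_eq_of_mul_eq_one_right <| by simp [hg]

theorem conj_apply_of_val_eq_diagonal (hg : (g : Matrix n n R) = diagonal fun i => (d i : R))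
    (A : Matrix n n R) (i j : n) :
    ((g : Matrix n n R) * A * (↑g⁻¹ : Matrix n n R)) i j = ↑(d i * (d j)⁻¹) * A i j := by
  rw [val_inv_eq_diagonal hg, hg, mul_diagonal, diagonal_mul, Units.val_mul]
  ring

theorem mem_conjEquivariantSubgroup_of_val_eq_diagonal
    (hg : (g : Matrix n n R) = diagonal fun i => (d i : R)) {ψ : R → R} {u v : n → n}
    (hψ : ∀ t y, ψ (↑(d (u t) * (d (v t))⁻¹) * y) = d t * ψ y) :
    g ∈ conjEquivariantSubgroup fun A t => ψ (A (u t) (v t)) := fun A => by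
  ext t
  beta_reduce
  rw [conj_apply_of_val_eq_diagonal hg, hψ, hg, mulVec_diagonal]

theorem map_single_mul_of_val_eq_diagonal
    (hg : (g : Matrix n n R) = diagonal fun i => (d i : R)) {φ : Matrix n n R → n → R}
    (hφ : g ∈ conjEquivariantSubgroup φ) (i j t : n) (x : R) :
    φ (single i j (↑(d i * (d j)⁻¹) * x)) t = d t * φ (single i j x) t := by
  have hconj : (g : Matrix n n R) * single i j x * (↑g⁻¹ : Matrix n n R) =
      single i j (↑(d i * (d j)⁻¹) * x) := by
    ext i' j'
    rw [conj_apply_of_val_eq_diagonal hg]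
    by_cases h : i = i' ∧ j = j'
    · obtain ⟨rfl, rfl⟩ := h
      simp
    · simp [h]
  rw [← hconj, hφ, hg, mulVec_diagonal]

end Diagonal

section TwoByTwo

variable {S : (Matrix (Fin 2) (Fin 2) R)ˣ}

theorem val_inv_of_val_eq_swap (hS : (S : Matrix (Fin 2) (Fin 2) R) = !![0, 1; 1, 0]) :
    (↑S⁻¹ : Matrix (Fin 2) (Fin 2) R) = !![0, 1; 1, 0] :=
  Units.inv_eq_of_mul_eq_one_right <| by simp [hS, one_fin_two]

theorem conj_apply_of_val_eq_swap (hS : (S : Matrix (Fin 2) (Fin 2) R) = !![0, 1; 1, 0])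
    (A : Matrix (Fin 2) (Fin 2) R) (i j : Fin 2) :
    ((S : Matrix (Fin 2) (Fin 2) R) * A * (↑S⁻¹ : Matrix (Fin 2) (Fin 2) R)) i j =
      A i.rev j.rev := by
  rw [val_inv_of_val_eq_swap hS, hS]
  fin_cases i <;> fin_cases j <;> simp [mul_apply, vecMul, dotProduct, Fin.sum_univ_two]

theorem mulVec_apply_of_val_eq_swap (hS : (S : Matrix (Fin 2) (Fin 2) R) = !![0, 1; 1, 0])
    (w : Fin 2 → R) (i : Fin 2) : ((S : Matrix (Fin 2) (Fin 2) R) *ᵥ w) i = w i.rev := by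
  rw [hS]
  fin_cases i <;> simp [mulVec, dotProduct, Fin.sum_univ_two]

theorem mem_conjEquivariantSubgroup_of_val_eq_swap
    (hS : (S : Matrix (Fin 2) (Fin 2) R) = !![0, 1; 1, 0]) (ψ : R → R) {u v : Fin 2 → Fin 2}
    (hu : ∀ t, u t.rev = (u t).rev) (hv : ∀ t, v t.rev = (v t).rev) :
    S ∈ conjEquivariantSubgroup fun A t => ψ (A (u t) (v t)) := fun A => by
  ext t
  beta_reduce
  rw [conj_apply_of_val_eq_swap hS, mulVec_apply_of_val_eq_swap hS, hu, hv]

end TwoByTwo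

end Matrix

/-- `diag(a, a⁻¹) = diagonal fun i => a ^ torusWeight i`. -/
def torusWeight : Fin 2 → ℤ := ![1, -1]

theorem torusWeight_rev (t : Fin 2) : torusWeight t.rev = -torusWeight t := by
  fin_cases t <;> rfl

theorem torusWeight_mul_self (t : Fin 2) : torusWeight t * torusWeight t = 1 := by
  fin_cases t <;> rfl

theorem torusWeight_mul_eq_one_or (i t : Fin 2) :
    torusWeight i * torusWeight t = 1 ∨ torusWeight i * torusWeight t = -1 := by
  fin_cases i <;> fin_cases t <;> decide

theorem zpow_torusWeight_pow_eq_iff {G : Type*} [Group G] {a : G} {n : ℕ} (ha : orderOf a = n)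
    (p m : ℕ) (i t : Fin 2) :
    (a ^ torusWeight t) ^ p ^ m = a ^ torusWeight i * (a ^ torusWeight i.rev)⁻¹ ↔
      (p : ℤ) ^ m ≡ 2 * (torusWeight i * torusWeight t) [ZMOD n] := by
  rw [← zpow_natCast, ← zpow_mul, ← zpow_neg, ← zpow_add, zpow_eq_zpow_iff_modEq, ha,
    torusWeight_rev, neg_neg, ← two_mul]
  have hunit := torusWeight_mul_self t
  constructor <;> intro h <;> have := h.mul_left (torusWeight t)
  · rwa [← mul_assoc, hunit, one_mul, mul_left_comm, mul_comm (torusWeight t)] at this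
  · rwa [show torusWeight t * (2 * (torusWeight i * torusWeight t)) = 2 * torusWeight i by
      linear_combination (2 * torusWeight i) * hunit] at this

open Matrix

section SplitTorus

variable {k : Type*} [Field k] [Finite k] {p n : ℕ} [Fact p.Prime] [CharP k p] {a : kˣ}
  {D S : (Matrix (Fin 2) (Fin 2) k)ˣ}

theorem exists_pow_modEq_two_mul_of_mem_conjEquivariantSubgroup (hn1 : 1 < n)
    (ha : orderOf a = n)
    (hD : (D : Matrix (Fin 2) (Fin 2) k) = diagonal fun i => ((a ^ torusWeight i : kˣ) : k))
    {φ : Matrix (Fin 2) (Fin 2) k → Fin 2 → k} (hadd : ∀ A B, φ (A + B) = φ A + φ B)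
    (hne : ∃ A, φ A ≠ 0) (hφ : D ∈ conjEquivariantSubgroup φ) :
    ∃ ε : ℤ, (ε = 1 ∨ ε = -1) ∧ ∃ i : ℕ, (p : ℤ) ^ i ≡ 2 * ε [ZMOD n] := by
  let := ZMod.algebra k p
  obtain ⟨A, hA⟩ := hne
  obtain ⟨i, j, t, x, hx⟩ := exists_map_single_apply_ne_zero (AddMonoidHom.mk' φ hadd) hA
  let ψ : k →+ k := AddMonoidHom.mk' (fun y => φ (single i j y) t) fun y z => by
    simp only [single_add, hadd, Pi.add_apply]
  obtain ⟨σ, hσ⟩ := exists_algEquiv_apply_eq_of_map_mul (ψ.toZModLinearMap p)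
    (DFunLike.ne_iff.mpr ⟨x, hx⟩) (map_single_mul_of_val_eq_diagonal hD hφ i j t)
  obtain ⟨m, hm⟩ := FiniteField.exists_apply_eq_pow_card_pow σ
  rw [ZMod.card] at hm
  obtain rfl | hij := eq_or_ne i j
  · rw [mul_inv_cancel, Units.val_one, map_eq_one_iff σ σ.injective, ← Units.val_one,
      Units.val_inj] at hσ
    have ha1 : a = 1 := by
      fin_cases t <;> simpa [torusWeight] using hσ
    exact absurd (ha ▸ ha1 ▸ orderOf_one) hn1.ne'
  · obtain rfl : j = i.rev := by fin_cases i <;> fin_cases j <;> simp_all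
    have hpow : (a ^ torusWeight t) ^ p ^ m = a ^ torusWeight i * (a ^ torusWeight i.rev)⁻¹ :=
      Units.val_injective (by rw [Units.val_pow_eq_pow_val, ← hm, hσ])
    exact ⟨_, torusWeight_mul_eq_one_or i t, m, (zpow_torusWeight_pow_eq_iff ha p m i t).mp hpow⟩

theorem exists_conjEquivariant_of_pow_modEq (ha : orderOf a = n)
    (hD : (D : Matrix (Fin 2) (Fin 2) k) = diagonal fun i => ((a ^ torusWeight i : kˣ) : k))
    (hS : (S : Matrix (Fin 2) (Fin 2) k) = !![0, 1; 1, 0]) {ε : ℤ} {m : ℕ}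
    (hm : (p : ℤ) ^ m ≡ 2 * ε [ZMOD n]) {u : Fin 2 → Fin 2} (hu : ∀ t, u t.rev = (u t).rev)
    (hε : ∀ t, torusWeight (u t) * torusWeight t = ε) :
    ∃ φ : Matrix (Fin 2) (Fin 2) k → Fin 2 → k, (∃ A, φ A ≠ 0) ∧
      (∀ A B, φ (A + B) = φ A + φ B) ∧
      Subgroup.closure {D, S} ≤ conjEquivariantSubgroup φ := by
  let ψ := (iterateFrobeniusEquiv k p m).symm
  have hψ (x y : k) : ψ (x ^ p ^ m * y) = x * ψ y := by
    rw [map_mul, ← iterateFrobeniusEquiv_def, RingEquiv.symm_apply_apply]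
  refine ⟨fun A t => ψ (A (u t) (u t).rev), ⟨!![0, 1; 1, 0], ?_⟩, fun A B => ?_, ?_⟩
  · refine Function.ne_iff.mpr ⟨0, ?_⟩
    have : (!![0, 1; 1, 0] : Matrix (Fin 2) (Fin 2) k) (u 0) (u 0).rev = 1 := by
      generalize u 0 = i
      fin_cases i <;> rfl
    simp [this]
  · ext t
    exact map_add ψ _ _
  · refine (Subgroup.closure_le _).mpr (Set.insert_subset_iff.mpr ⟨?_, ?_⟩)
    · refine mem_conjEquivariantSubgroup_of_val_eq_diagonal hD fun t y => ?_
      rw [← (zpow_torusWeight_pow_eq_iff ha p m (u t) t).mpr (hε t ▸ hm), Units.val_pow_eq_pow_val,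
        hψ]
    · exact Set.singleton_subset_iff.mpr
        (mem_conjEquivariantSubgroup_of_val_eq_swap hS ψ hu fun t => by rw [hu, Fin.rev_rev])

end SplitTorus

theorem Int.dvd_pow_sub_one_of_pow_modEq {n x y : ℤ} {f m : ℕ} (hx : x ^ f ≡ 1 [ZMOD n])
    (hy : x ^ m ≡ y [ZMOD n]) : n ∣ y ^ f - 1 := by
  have : y ^ f ≡ 1 [ZMOD n] := calc
    y ^ f ≡ (x ^ m) ^ f [ZMOD n] := (hy.pow f).symm
    _ = (x ^ f) ^ m := by rw [← pow_mul, ← pow_mul, mul_comm]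
    _ ≡ 1 [ZMOD n] := by simpa using hx.pow m
  exact Int.modEq_iff_dvd.mp this.symm

theorem stmt5_general {k : Type} [Field k] [Fintype k]
    (p f n : ℕ) (hp : p.Prime) [CharP k p]
    (hn1 : 1 < n) (hndvd : n ∣ p ^ f - 1)
    (a : kˣ) (ha : orderOf a = n)
    (D S : (Matrix (Fin 2) (Fin 2) k)ˣ)
    (hD : (D : Matrix (Fin 2) (Fin 2) k) = !![(a : k), 0; 0, ((a⁻¹ : kˣ) : k)])
    (hS : (S : Matrix (Fin 2) (Fin 2) k) = !![0, 1; 1, 0]) :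
    [(∃ φ : Matrix (Fin 2) (Fin 2) k → (Fin 2 → k),
        (∃ A, φ A ≠ 0) ∧
        (∀ A B, φ (A + B) = φ A + φ B) ∧
        (∀ g ∈ Subgroup.zpowers D, ∀ A,
          φ ((g : Matrix (Fin 2) (Fin 2) k) * A * ((g⁻¹ : (Matrix (Fin 2) (Fin 2) k)ˣ) :
              Matrix (Fin 2) (Fin 2) k)) =
            (g : Matrix (Fin 2) (Fin 2) k).mulVec (φ A))),
     (∃ φ : Matrix (Fin 2) (Fin 2) k → (Fin 2 → k),
        (∃ A, φ A ≠ 0) ∧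
        (∀ A B, φ (A + B) = φ A + φ B) ∧
        (∀ g ∈ Subgroup.closure ({D, S} : Set (Matrix (Fin 2) (Fin 2) k)ˣ), ∀ A,
          φ ((g : Matrix (Fin 2) (Fin 2) k) * A * ((g⁻¹ : (Matrix (Fin 2) (Fin 2) k)ˣ) :
              Matrix (Fin 2) (Fin 2) k)) =
            (g : Matrix (Fin 2) (Fin 2) k).mulVec (φ A))),
     (∃ ε : ℤ, (ε = 1 ∨ ε = -1) ∧ ∃ i : ℕ, (p : ℤ) ^ i ≡ 2 * ε [ZMOD n]),
     (∃ ε : ℤ, (ε = 1 ∨ ε = -1) ∧ ∃ i : ℕ,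
        (p : ℤ) ^ i ≡ 2 * ε [ZMOD n] ∧ (n : ℤ) ∣ (2 * ε) ^ f - 1)].TFAE := by
  have : Fact p.Prime := ⟨hp⟩
  have hD' :
      (D : Matrix (Fin 2) (Fin 2) k) = diagonal fun i => ((a ^ torusWeight i : kˣ) : k) := by
    rw [hD]
    ext i j
    fin_cases i <;> fin_cases j <;> simp [torusWeight]
  have hpf : (p : ℤ) ^ f ≡ 1 [ZMOD n] :=
    (Int.natCast_modEq_iff.mpr ((Nat.modEq_iff_dvd' (Nat.one_le_pow _ _ hp.pos)).mpr hndvd)).symm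
  tfae_have 1 → 3 := fun ⟨φ, hne, hadd, hφ⟩ =>
    exists_pow_modEq_two_mul_of_mem_conjEquivariantSubgroup hn1 ha hD' hadd hne
      (hφ D (Subgroup.mem_zpowers D))
  tfae_have 3 → 2 := by
    rintro ⟨ε, rfl | rfl, m, hm⟩
    · exact exists_conjEquivariant_of_pow_modEq ha hD' hS hm (u := id) (fun _ => rfl)
        torusWeight_mul_self
    · exact exists_conjEquivariant_of_pow_modEq ha hD' hS hm (u := Fin.rev) (fun _ => rfl)
        fun t => by rw [torusWeight_rev, neg_mul, torusWeight_mul_self]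
  tfae_have 2 → 1 := fun ⟨φ, hne, hadd, hφ⟩ =>
    ⟨φ, hne, hadd, fun g hg =>
      hφ g (Subgroup.zpowers_le.mpr (Subgroup.subset_closure (by simp)) hg)⟩
  tfae_have 3 → 4 := fun ⟨ε, hε, m, hm⟩ =>
    ⟨ε, hε, m, hm, Int.dvd_pow_sub_one_of_pow_modEq hpf hm⟩
  tfae_have 4 → 3 := fun ⟨ε, hε, m, hm, _⟩ => ⟨ε, hε, m, hm⟩
  tfae_finish

/-- **split dihedral case.** Let `p` be an odd prime, `k` a finite field with
`#k = p^f`, `n > 1` an odd divisor of `p^f - 1`, `a ∈ k^×` of order exactly `n`,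
`D = diag(a, a⁻¹)` and `S = [[0,1],[1,0]]` in `GL₂(k)`, `C = ⟨D⟩` and `H = ⟨D, S⟩` (dihedral of
order `2n`).  Then the existence of a nonzero `𝔽_p`-linear `C`-equivariant map
`M₂(k) → k²` (for the conjugation action on the source and the standard action on the target),
the same for `H`, the condition `∃ ε = ±1, ∃ i, p^i ≡ 2ε (mod n)`, and the condition
`∃ ε = ±1, ∃ i, p^i ≡ 2ε (mod n) ∧ n ∣ (2ε)^f - 1` are all equivalent.  (An `𝔽_p`-linear map
between vector spaces over `𝔽_p` is the same as an additive map.) -/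
theorem stmt5 {k : Type} [Field k] [Fintype k]
    (p f n : ℕ) (hp : p.Prime) (hp2 : p ≠ 2) [CharP k p]
    (hcard : Fintype.card k = p ^ f)
    (hn1 : 1 < n) (hnodd : Odd n) (hndvd : n ∣ p ^ f - 1)
    (a : kˣ) (ha : orderOf a = n)
    (D S : (Matrix (Fin 2) (Fin 2) k)ˣ)
    (hD : (D : Matrix (Fin 2) (Fin 2) k) = !![(a : k), 0; 0, ((a⁻¹ : kˣ) : k)])
    (hS : (S : Matrix (Fin 2) (Fin 2) k) = !![0, 1; 1, 0]) :
    [(∃ φ : Matrix (Fin 2) (Fin 2) k → (Fin 2 → k),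
        (∃ A, φ A ≠ 0) ∧
        (∀ A B, φ (A + B) = φ A + φ B) ∧
        (∀ g ∈ Subgroup.zpowers D, ∀ A,
          φ ((g : Matrix (Fin 2) (Fin 2) k) * A * ((g⁻¹ : (Matrix (Fin 2) (Fin 2) k)ˣ) :
              Matrix (Fin 2) (Fin 2) k)) =
            (g : Matrix (Fin 2) (Fin 2) k).mulVec (φ A))),
     (∃ φ : Matrix (Fin 2) (Fin 2) k → (Fin 2 → k),
        (∃ A, φ A ≠ 0) ∧
        (∀ A B, φ (A + B) = φ A + φ B) ∧
        (∀ g ∈ Subgroup.closure ({D, S} : Set (Matrix (Fin 2) (Fin 2) k)ˣ), ∀ A,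
          φ ((g : Matrix (Fin 2) (Fin 2) k) * A * ((g⁻¹ : (Matrix (Fin 2) (Fin 2) k)ˣ) :
              Matrix (Fin 2) (Fin 2) k)) =
            (g : Matrix (Fin 2) (Fin 2) k).mulVec (φ A))),
     (∃ ε : ℤ, (ε = 1 ∨ ε = -1) ∧ ∃ i : ℕ, (p : ℤ) ^ i ≡ 2 * ε [ZMOD n]),
     (∃ ε : ℤ, (ε = 1 ∨ ε = -1) ∧ ∃ i : ℕ,
        (p : ℤ) ^ i ≡ 2 * ε [ZMOD n] ∧ (n : ℤ) ∣ (2 * ε) ^ f - 1)].TFAE :=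
  stmt5_general p f n hp hn1 hndvd a ha D S hD hS
end

section
/- Let p be an odd prime, k a finite field with #k = p^f, k₂ a quadratic field extension of k, and n > 1 an odd integer dividing p^f + 1. Let u ∈ k₂^× have multiplicative order exactly n and norm N_{k₂/k}(u) = 1. Regard V := k₂ as a 2-dimensional k-vector space; let m_u ∈ GL_k(V) be multiplication by u and let φ ∈ GL_k(V) be the nontrivial k-automorphism of k₂ (x ↦ x^{#k}); let C be the cyclic subgroup of GL_k(V) generated by m_u and H the subgroup generated by m_u and φ (so H is dihedral of order 2n). Then the following are equivalent: (i) there exists a nonzero 𝔽_p-linear map f : End_k(V) → V with f(gAg⁻¹) = g f(A) for all g ∈ C; (ii) the same with C replaced by H; (iii) there exists i ∈ ℕ with p^i ≡ 2 (mod n); (iv) there exists i ∈ ℕ with p^i ≡ 2 (mod n) and n divides 2^f − (−1)^i. -/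
/-!
Write `q = #k` and `σ = (x ↦ x ^ q)`. Every `k`-linear endomorphism of `k₂` is uniquely
`x ↦ a * x + b * σ x`, and conjugation by `m_u` and by `φ` acts on the coefficient `b` by
`b ↦ u * σ u⁻¹ * b = u ^ 2 * b` (as `u ^ (q + 1) = 1`) and `b ↦ σ b`. An additive
`C`-equivariant `F` kills the maps `x ↦ a * x` (they commute with `m_u`, and `u ≠ 1`), so it is
given by an additive, hence `𝔽_p`-linear, `E : k₂ → k₂` with `E (u ^ 2 * b) = u * E b`. Then
`E (g (u ^ 2) * b) = g u * E b` for `g ∈ 𝔽_p[X]`; taking for `g` the minimal polynomial of `u ^ 2`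
shows that `u` is a Galois conjugate `(u ^ 2) ^ p ^ j` of `u ^ 2`, i.e. `2 * p ^ j ≡ 1 (mod n)`.
Conversely, for such `j` the map `A ↦ b ^ p ^ j` is `H`-equivariant. Since `p ^ f ≡ -1 (mod n)`,
`2 * p ^ j ≡ 1` for some `j` iff `p ^ i ≡ 2` for some `i`, and then
`2 ^ f ≡ p ^ (i * f) ≡ (-1) ^ i`.
-/

open Polynomial

theorem exists_pow_pow_eq_of_aeval_minpoly {L : Type*} [Field L] [Finite L] (p : ℕ)
    [Fact p.Prime] [Algebra (ZMod p) L] {v w : L} (hw : aeval w (minpoly (ZMod p) v) = 0) :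
    ∃ j : ℕ, v ^ p ^ j = w := by
  have hmin : minpoly (ZMod p) v = minpoly (ZMod p) w :=
    minpoly.eq_of_irreducible_of_monic (minpoly.irreducible (.of_finite _ v)) hw
      (minpoly.monic (.of_finite _ v))
  obtain ⟨τ, rfl⟩ := (Normal.minpoly_eq_iff_mem_orbit L).mp hmin.symm
  obtain ⟨j, rfl⟩ := (FiniteField.bijective_frobeniusAlgEquivOfAlgebraic_pow (ZMod p) L).2 τ
  refine ⟨j, ?_⟩
  show _ = (FiniteField.frobeniusAlgEquivOfAlgebraic (ZMod p) L ^ (j : ℕ)) v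
  rw [AlgEquiv.coe_pow, FiniteField.coe_frobeniusAlgEquivOfAlgebraic_iterate, ZMod.card]

theorem exists_pow_pow_eq_of_semiconj {L : Type*} [Field L] [Finite L] (p : ℕ) [Fact p.Prime]
    [Algebra (ZMod p) L] (E : L →+ L) (hE : E ≠ 0) {v w : L}
    (hvw : ∀ x, E (v * x) = w * E x) : ∃ j : ℕ, v ^ p ^ j = w := by
  have hpoly : ∀ (g : (ZMod p)[X]) (x : L), E (aeval v g * x) = aeval w g * E x := by
    intro g
    induction g using Polynomial.induction_on' with
    | add g h hg hh => intro x; simp only [map_add, add_mul, hg, hh]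
    | monomial m c =>
      intro x
      have hpow : ∀ y, E (v ^ m * y) = w ^ m * E y := fun y => by
        rw [← mul_left_iterate_apply, ← mul_left_iterate_apply,
          (Function.Semiconj.iterate_right (f := E) hvw m).eq]
      rw [aeval_monomial, aeval_monomial, mul_assoc, mul_assoc, ← Algebra.smul_def,
        ← Algebra.smul_def, ZMod.map_smul, hpow]
  obtain ⟨x, hx⟩ := DFunLike.ne_iff.mp hE
  refine exists_pow_pow_eq_of_aeval_minpoly p ((mul_eq_zero.mp ?_).resolve_right hx)
  rw [← hpoly, minpoly.aeval, zero_mul, map_zero]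

theorem FiniteField.frobeniusAlgEquivOfAlgebraic_ne_one {k K : Type*} [Field k] [Fintype k]
    [Field K] [Algebra k K] [Finite K] (hK : 1 < Module.finrank k K) :
    frobeniusAlgEquivOfAlgebraic k K ≠ 1 := by
  rw [Ne, ← orderOf_eq_one_iff, orderOf_frobeniusAlgEquivOfAlgebraic]
  exact hK.ne'

theorem FiniteField.mul_frobeniusAlgEquivOfAlgebraic_inv {k K : Type*} [Field k] [Fintype k]
    [Field K] [Algebra k K] [Algebra.IsAlgebraic k K] {u : K} (hu : u ^ (Fintype.card k + 1) = 1) :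
    u * frobeniusAlgEquivOfAlgebraic k K u⁻¹ = u ^ 2 := by
  show u * u⁻¹ ^ Fintype.card k = _
  rw [inv_pow, eq_inv_of_mul_eq_one_left ((pow_succ u _).symm.trans hu), inv_inv, sq]

section ConjEquivariant

variable {R M : Type*} [CommSemiring R] [AddCommMonoid M] [Module R M]

def conjEquivariantSubgroup (F : Module.End R M → M) : Subgroup (M ≃ₗ[R] M) where
  carrier := {g | ∀ A, F (g.conj A) = g (F A)}
  one_mem' _ := rfl
  mul_mem' {g h} hg hh A := by
    change F (g.conj (h.conj A)) = g (h (F A))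
    rw [hg, hh]
  inv_mem' {g} hg A := by
    change F (g.symm.conj A) = g.symm (F A)
    rw [LinearEquiv.eq_symm_apply, ← hg, LinearEquiv.conj_conj_symm]

end ConjEquivariant

section QuadraticExtension

variable {k K : Type*} [Field k] [Field K] [Algebra k K] (σ : K ≃ₐ[k] K)

def twistedEnd (a b : K) : Module.End k K := a • LinearMap.id + b • σ.toLinearMap

@[simp]
theorem twistedEnd_apply (a b x : K) : twistedEnd σ a b x = a * x + b * σ x := rfl

theorem twistedEnd_add (a b a' b' : K) :
    twistedEnd σ (a + a') (b + b') = twistedEnd σ a b + twistedEnd σ a' b' := by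
  ext x; simp; ring

theorem conj_twistedEnd_of_mul {g : K ≃ₗ[k] K} {u : K} (hg : ∀ x, g x = u * x) (a b : K) :
    g.conj (twistedEnd σ a b) = twistedEnd σ a (u * σ u⁻¹ * b) := by
  have hu : u ≠ 0 := by simpa [hg] using g.map_ne_zero_iff.mpr one_ne_zero
  have hg' : ∀ x, g.symm x = u⁻¹ * x := fun x => by
    rw [LinearEquiv.symm_apply_eq, hg, mul_inv_cancel_left₀ hu]
  ext x
  simp only [LinearEquiv.conj_apply_apply, hg, hg', twistedEnd_apply, map_mul]
  field_simp

theorem conj_twistedEnd_self (a b : K) :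
    σ.toLinearEquiv.conj (twistedEnd σ a b) = twistedEnd σ (σ a) (σ b) := by
  ext x
  simp

/-- Solves `A 1 = a + b`, `A t = a * t + b * σ t` for the `b` of `A = twistedEnd σ a b`. -/
def twistCoeff (t : K) : Module.End k K →+ K where
  toFun A := (A t - t * A 1) / (σ t - t)
  map_zero' := by simp
  map_add' A B := by simp only [LinearMap.add_apply]; ring

variable {σ} {t : K}

theorem twistCoeff_twistedEnd (ht : σ t ≠ t) (a b : K) :
    twistCoeff σ t (twistedEnd σ a b) = b := by
  have : σ t - t ≠ 0 := sub_ne_zero.mpr ht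
  simp only [twistCoeff, AddMonoidHom.coe_mk, ZeroHom.coe_mk, twistedEnd_apply, map_one]
  field_simp
  ring

theorem linearIndependent_one_of_apply_ne (ht : σ t ≠ t) : LinearIndependent k ![1, t] := by
  refine LinearIndependent.pair_iff.mpr fun c d hcd => ?_
  have hd : d = 0 := by
    by_contra hd
    apply ht
    have : t = algebraMap k K (-c / d) := by
      rw [Algebra.smul_def, Algebra.smul_def, mul_one] at hcd
      rw [map_div₀, map_neg, eq_div_iff (by simpa using hd)]
      linear_combination hcd
    rw [this, AlgEquiv.commutes]
  subst hd
  simpa using hcd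

theorem eq_twistedEnd (hK : Module.finrank k K = 2) (ht : σ t ≠ t) (A : Module.End k K) :
    A = twistedEnd σ (A 1 - twistCoeff σ t A) (twistCoeff σ t A) := by
  let B := basisOfLinearIndependentOfCardEqFinrank (linearIndependent_one_of_apply_ne ht)
    (by simp [hK])
  refine B.ext fun i => ?_
  have : σ t - t ≠ 0 := sub_ne_zero.mpr ht
  fin_cases i <;> simp [B, twistCoeff]
  field_simp
  ring

theorem twistCoeff_conj_of_mul (hK : Module.finrank k K = 2) (ht : σ t ≠ t)
    {g : K ≃ₗ[k] K} {u : K} (hg : ∀ x, g x = u * x) (A : Module.End k K) :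
    twistCoeff σ t (g.conj A) = u * σ u⁻¹ * twistCoeff σ t A := by
  conv_lhs => rw [eq_twistedEnd hK ht A, conj_twistedEnd_of_mul σ hg, twistCoeff_twistedEnd ht]

theorem twistCoeff_conj_self (hK : Module.finrank k K = 2) (ht : σ t ≠ t) (A : Module.End k K) :
    twistCoeff σ t (σ.toLinearEquiv.conj A) = σ (twistCoeff σ t A) := by
  conv_lhs => rw [eq_twistedEnd hK ht A, conj_twistedEnd_self, twistCoeff_twistedEnd ht]

variable (σ)

theorem exists_ne_zero_closure_le_conjEquivariantSubgroup (hK : Module.finrank k K = 2)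
    (hσ : σ ≠ 1) (p : ℕ) [ExpChar K p] {g : K ≃ₗ[k] K} {u : K} (hg : ∀ x, g x = u * x) {j : ℕ}
    (hj : (u * σ u⁻¹) ^ p ^ j = u) :
    ∃ F : Module.End k K →+ K, F ≠ 0 ∧
      Subgroup.closure {g, σ.toLinearEquiv} ≤ conjEquivariantSubgroup F := by
  obtain ⟨t, ht⟩ : ∃ t, σ t ≠ t := by simpa [DFunLike.ne_iff] using hσ
  refine ⟨(iterateFrobenius K p j).toAddMonoidHom.comp (twistCoeff σ t), ?_, ?_⟩
  · refine DFunLike.ne_iff.mpr ⟨twistedEnd σ 0 1, ?_⟩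
    simp [twistCoeff_twistedEnd ht]
  · refine (Subgroup.closure_le _).mpr (Set.insert_subset_iff.mpr ⟨fun A => ?_, ?_⟩)
    · show twistCoeff σ t (g.conj A) ^ p ^ j = g (twistCoeff σ t A ^ p ^ j)
      rw [twistCoeff_conj_of_mul hK ht hg, mul_pow, hj, hg]
    · rintro _ rfl A
      show twistCoeff σ t (σ.toLinearEquiv.conj A) ^ p ^ j = σ (twistCoeff σ t A ^ p ^ j)
      rw [twistCoeff_conj_self hK ht, map_pow]

theorem exists_pow_pow_eq_of_mem_conjEquivariantSubgroup [Finite K]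
    (hK : Module.finrank k K = 2) (hσ : σ ≠ 1) (p : ℕ) [Fact p.Prime] [Algebra (ZMod p) K]
    {g : K ≃ₗ[k] K} {u : K} (hg : ∀ x, g x = u * x) (hu : u ≠ 1) (F : Module.End k K →+ K)
    (hF : F ≠ 0) (hFg : g ∈ conjEquivariantSubgroup F) :
    ∃ j : ℕ, (u * σ u⁻¹) ^ p ^ j = u := by
  obtain ⟨t, ht⟩ : ∃ t, σ t ≠ t := by simpa [DFunLike.ne_iff] using hσ
  have hscalar : ∀ a, F (twistedEnd σ a 0) = 0 := fun a => by
    have h : F (twistedEnd σ a 0) = u * F (twistedEnd σ a 0) := by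
      rw [← hg, ← hFg, conj_twistedEnd_of_mul σ hg, mul_zero]
    have h' : (1 - u) * F (twistedEnd σ a 0) = 0 := by linear_combination h
    exact (mul_eq_zero.mp h').resolve_left (sub_ne_zero.mpr hu.symm)
  let E : K →+ K := AddMonoidHom.mk' (fun b => F (twistedEnd σ 0 b)) fun b c => by
    rw [← map_add, ← twistedEnd_add, add_zero]
  have hE : E ≠ 0 := by
    obtain ⟨A, hA⟩ := DFunLike.ne_iff.mp hF
    rw [eq_twistedEnd hK ht A, ← zero_add (twistCoeff σ t A), ← add_zero (A 1 - _),
      twistedEnd_add, map_add, hscalar, zero_add] at hA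
    exact DFunLike.ne_iff.mpr ⟨_, hA⟩
  refine exists_pow_pow_eq_of_semiconj p E hE fun b => ?_
  change F (twistedEnd σ 0 (u * σ u⁻¹ * b)) = u * F (twistedEnd σ 0 b)
  rw [← conj_twistedEnd_of_mul σ hg, hFg, hg]

end QuadraticExtension

theorem Units.val_pow_eq_self_iff {K : Type*} [Monoid K] {u : Kˣ} {n : ℕ} (hu : orderOf u = n)
    (m : ℕ) : (u : K) ^ m = u ↔ (m : ZMod n) = 1 := by
  subst hu
  rw [← Units.val_pow_eq_pow_val, Units.val_inj, ← Nat.cast_one, ZMod.natCast_eq_natCast_iff,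
    ← pow_eq_pow_iff_modEq, pow_one]

theorem exists_pow_eq_iff_exists_mul_pow_eq_one {M : Type*} [CommMonoid M] {x : M} {N : ℕ}
    (hN : 0 < N) (hx : x ^ N = 1) (y : M) : (∃ i, x ^ i = y) ↔ ∃ j, y * x ^ j = 1 := by
  have hsplit : ∀ m, x ^ ((N - 1) * m) * x ^ m = 1 := fun m => by
    rw [← pow_add, ← Nat.succ_mul, Nat.succ_eq_add_one, Nat.sub_add_cancel hN, pow_mul, hx,
      one_pow]
  constructor
  · rintro ⟨i, rfl⟩
    exact ⟨(N - 1) * i, by rw [mul_comm, hsplit]⟩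
  · rintro ⟨j, hj⟩
    refine ⟨(N - 1) * j, ?_⟩
    rw [← mul_one (x ^ ((N - 1) * j)), ← hj, mul_left_comm, hsplit, mul_one]

section PowModEqNegOne

variable {p f n : ℕ}

theorem natCast_pow_eq_neg_one (hndvd : n ∣ p ^ f + 1) : (p : ZMod n) ^ f = -1 := by
  rw [eq_neg_iff_add_eq_zero]
  exact_mod_cast (ZMod.natCast_eq_zero_iff _ _).mpr hndvd

theorem exists_pow_modEq_two_iff (hndvd : n ∣ p ^ f + 1) (hf : 0 < f) :
    (∃ i : ℕ, (p : ℤ) ^ i ≡ 2 [ZMOD n]) ↔ ∃ j : ℕ, 2 * (p : ZMod n) ^ j = 1 := by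
  simp only [← ZMod.intCast_eq_intCast_iff]
  push_cast
  refine exists_pow_eq_iff_exists_mul_pow_eq_one (N := 2 * f) (by omega) ?_ _
  rw [pow_mul', natCast_pow_eq_neg_one hndvd, neg_one_sq]

theorem dvd_two_pow_sub_neg_one_pow (hndvd : n ∣ p ^ f + 1) {i : ℕ}
    (hi : (p : ℤ) ^ i ≡ 2 [ZMOD n]) :
    (n : ℤ) ∣ 2 ^ f - (-1) ^ i := by
  have hi' := (ZMod.intCast_eq_intCast_iff _ _ _).mpr hi
  push_cast at hi'
  rw [← ZMod.intCast_zmod_eq_zero_iff_dvd]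
  push_cast
  rw [sub_eq_zero, ← hi', ← pow_mul, mul_comm, pow_mul, natCast_pow_eq_neg_one hndvd]

end PowModEqNegOne

theorem stmt6_general {k k₂ : Type} [Field k] [Fintype k] [Field k₂] [Algebra k k₂]
    (p f n : ℕ) (hp : p.Prime) [CharP k p]
    (hcard : Fintype.card k = p ^ f)
    (hquad : Module.finrank k k₂ = 2)
    (hn1 : 1 < n) (hndvd : n ∣ p ^ f + 1)
    (u : k₂ˣ) (hu : orderOf u = n)
    (mu φ : k₂ ≃ₗ[k] k₂)
    (hmu : ∀ x : k₂, mu x = (u : k₂) * x)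
    (hφ : ∀ x : k₂, φ x = x ^ (Fintype.card k)) :
    [(∃ F : Module.End k k₂ → k₂,
        (∃ A, F A ≠ 0) ∧
        (∀ A B, F (A + B) = F A + F B) ∧
        (∀ g ∈ Subgroup.zpowers mu, ∀ A : Module.End k k₂,
          F ((g : k₂ ≃ₗ[k] k₂).toLinearMap ∘ₗ A ∘ₗ (g : k₂ ≃ₗ[k] k₂).symm.toLinearMap) =
            (g : k₂ ≃ₗ[k] k₂) (F A))),
     (∃ F : Module.End k k₂ → k₂,
        (∃ A, F A ≠ 0) ∧
        (∀ A B, F (A + B) = F A + F B) ∧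
        (∀ g ∈ Subgroup.closure ({mu, φ} : Set (k₂ ≃ₗ[k] k₂)), ∀ A : Module.End k k₂,
          F ((g : k₂ ≃ₗ[k] k₂).toLinearMap ∘ₗ A ∘ₗ (g : k₂ ≃ₗ[k] k₂).symm.toLinearMap) =
            (g : k₂ ≃ₗ[k] k₂) (F A))),
     (∃ i : ℕ, (p : ℤ) ^ i ≡ 2 [ZMOD n]),
     (∃ i : ℕ, (p : ℤ) ^ i ≡ 2 [ZMOD n] ∧ (n : ℤ) ∣ 2 ^ f - (-1) ^ i)].TFAE := by
  have : Fact p.Prime := ⟨hp⟩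
  have : Module.Finite k k₂ := Module.finite_of_finrank_eq_succ hquad
  have : Finite k₂ := Module.finite_of_finite k
  have : CharP k₂ p := charP_of_injective_algebraMap (algebraMap k k₂).injective p
  let := ZMod.algebra k₂ p
  set σ := FiniteField.frobeniusAlgEquivOfAlgebraic k k₂
  have hφσ : φ = σ.toLinearEquiv := LinearEquiv.ext hφ
  have hσ : σ ≠ 1 := FiniteField.frobeniusAlgEquivOfAlgebraic_ne_one (by omega)
  have hσu : (u : k₂) * σ (u : k₂)⁻¹ = u ^ 2 :=
    FiniteField.mul_frobeniusAlgEquivOfAlgebraic_inv <| by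
      rw [← Units.val_pow_eq_pow_val, orderOf_dvd_iff_pow_eq_one.mp (by rwa [hu, hcard]),
        Units.val_one]
  have hf : 0 < f := Nat.pos_of_ne_zero fun hf => by
    simpa [hcard, hf] using Fintype.one_lt_card (α := k)
  have hcrit : (∃ i : ℕ, (p : ℤ) ^ i ≡ 2 [ZMOD n]) ↔ ∃ j, (u * σ (u : k₂)⁻¹) ^ p ^ j = u := by
    simp only [exists_pow_modEq_two_iff hndvd hf, hσu, ← pow_mul, Units.val_pow_eq_self_iff hu,
      Nat.cast_mul, Nat.cast_pow, Nat.cast_ofNat]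
  tfae_have 1 → 3 := fun ⟨F, hF, hadd, hequiv⟩ => hcrit.mpr <|
    exists_pow_pow_eq_of_mem_conjEquivariantSubgroup σ hquad hσ p hmu
      (fun h => by rw [Units.val_eq_one.mp h, orderOf_one] at hu; omega) (.mk' F hadd)
      (DFunLike.ne_iff.mpr hF) (hequiv mu (Subgroup.mem_zpowers mu))
  tfae_have 3 → 2 := fun h => by
    obtain ⟨j, hj⟩ := hcrit.mp h
    obtain ⟨F, hF, hequiv⟩ := exists_ne_zero_closure_le_conjEquivariantSubgroup σ hquad hσ p hmu hj
    exact ⟨F, DFunLike.ne_iff.mp hF, map_add F, hφσ ▸ hequiv⟩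
  tfae_have 2 → 1 := fun ⟨F, hF, hadd, hequiv⟩ => ⟨F, hF, hadd, fun g hg =>
    hequiv g (Subgroup.zpowers_le.mpr (Subgroup.subset_closure (by simp)) hg)⟩
  tfae_have 3 → 4 := fun ⟨i, hi⟩ => ⟨i, hi, dvd_two_pow_sub_neg_one_pow hndvd hi⟩
  tfae_have 4 → 3 := fun ⟨i, hi, _⟩ => ⟨i, hi⟩
  tfae_finish

/-- **nonsplit dihedral case.** Let `p` be an odd prime, `k` a finite field with
`#k = p^f`, `k₂/k` a quadratic field extension, `n > 1` an odd divisor of `p^f + 1`, and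
`u ∈ k₂^×` of order exactly `n` with `N_{k₂/k}(u) = 1`.  View `V := k₂` as a `2`-dimensional
`k`-vector space, let `mu` be multiplication by `u` and `φ` the nontrivial `k`-automorphism
`x ↦ x^{#k}` of `k₂`, and let `C = ⟨mu⟩`, `H = ⟨mu, φ⟩ ≤ GL_k(V)` (dihedral of order `2n`).
Then the existence of a nonzero `𝔽_p`-linear `C`-equivariant map `End_k(V) → V` (conjugation
action on the source, standard action on the target), the same for `H`, the condition
`∃ i, p^i ≡ 2 (mod n)`, and the condition `∃ i, p^i ≡ 2 (mod n) ∧ n ∣ 2^f - (-1)^i` are all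
equivalent.  (An `𝔽_p`-linear map between vector spaces over `𝔽_p` is an additive map.) -/
theorem stmt6 {k k₂ : Type} [Field k] [Fintype k] [Field k₂] [Algebra k k₂]
    (p f n : ℕ) (hp : p.Prime) (hp2 : p ≠ 2) [CharP k p]
    (hcard : Fintype.card k = p ^ f)
    (hquad : Module.finrank k k₂ = 2)
    (hn1 : 1 < n) (hnodd : Odd n) (hndvd : n ∣ p ^ f + 1)
    (u : k₂ˣ) (hu : orderOf u = n) (hnorm : Algebra.norm k (u : k₂) = 1)
    (mu φ : k₂ ≃ₗ[k] k₂)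
    (hmu : ∀ x : k₂, mu x = (u : k₂) * x)
    (hφ : ∀ x : k₂, φ x = x ^ (Fintype.card k)) :
    [(∃ F : Module.End k k₂ → k₂,
        (∃ A, F A ≠ 0) ∧
        (∀ A B, F (A + B) = F A + F B) ∧
        (∀ g ∈ Subgroup.zpowers mu, ∀ A : Module.End k k₂,
          F ((g : k₂ ≃ₗ[k] k₂).toLinearMap ∘ₗ A ∘ₗ (g : k₂ ≃ₗ[k] k₂).symm.toLinearMap) =
            (g : k₂ ≃ₗ[k] k₂) (F A))),
     (∃ F : Module.End k k₂ → k₂,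
        (∃ A, F A ≠ 0) ∧
        (∀ A B, F (A + B) = F A + F B) ∧
        (∀ g ∈ Subgroup.closure ({mu, φ} : Set (k₂ ≃ₗ[k] k₂)), ∀ A : Module.End k k₂,
          F ((g : k₂ ≃ₗ[k] k₂).toLinearMap ∘ₗ A ∘ₗ (g : k₂ ≃ₗ[k] k₂).symm.toLinearMap) =
            (g : k₂ ≃ₗ[k] k₂) (F A))),
     (∃ i : ℕ, (p : ℤ) ^ i ≡ 2 [ZMOD n]),
     (∃ i : ℕ, (p : ℤ) ^ i ≡ 2 [ZMOD n] ∧ (n : ℤ) ∣ 2 ^ f - (-1) ^ i)].TFAE :=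
  stmt6_general p f n hp hcard hquad hn1 hndvd u hu mu φ hmu hφ
end

section
/- If H is a subgroup of GL_2(𝔽_3) such that (𝔽_3)² is an irreducible 𝔽_3[H]-module, then H contains the scalar matrix −id (i.e., H contains a nontrivial homothety). -/
namespace Stmt9Aux

abbrev R3 := ZMod 3
abbrev M3 := Matrix (Fin 2) (Fin 2) R3
abbrev Q4 := R3 × R3 × R3 × R3

def mulQ (a b : Q4) : Q4 :=
  (a.1*b.1 + a.2.1*b.2.2.1, a.1*b.2.1 + a.2.1*b.2.2.2,
   a.2.2.1*b.1 + a.2.2.2*b.2.2.1, a.2.2.1*b.2.1 + a.2.2.2*b.2.2.2)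

def oneQ : Q4 := (1,0,0,1)
def negQ : Q4 := (-1,0,0,-1)
def detQ (a : Q4) : R3 := a.1*a.2.2.2 - a.2.1*a.2.2.1

def ln : Fin 4 → R3 × R3 := ![(1,0),(0,1),(1,1),(1,2)]

def fxQ (g : Q4) (i : Fin 4) : Prop :=
  ∃ c : R3, (g.1*(ln i).1 + g.2.1*(ln i).2, g.2.2.1*(ln i).1 + g.2.2.2*(ln i).2)
    = (c*(ln i).1, c*(ln i).2)

instance (g : Q4) (i : Fin 4) : Decidable (fxQ g i) := by unfold fxQ; infer_instance

def FsQ (g : Q4) : Finset (Fin 4) := Finset.univ.filter (fxQ g)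

def bfQ (w : Q4) : Prop := w ≠ negQ ∧ mulQ w w ≠ negQ

instance (w : Q4) : Decidable (bfQ w) := by unfold bfQ; infer_instance

def φ (g : M3) : Q4 := (g 0 0, g 0 1, g 1 0, g 1 1)

lemma φ_mul (g h : M3) : φ (g*h) = mulQ (φ g) (φ h) := by
  simp [φ, mulQ, Matrix.mul_apply, Fin.sum_univ_two]

lemma φu_mul (a b : M3ˣ) : mulQ (φ ↑a) (φ ↑b) = φ ↑(a*b) := by
  rw [Units.val_mul, φ_mul]

lemma φ_neg (g : M3) (h : φ g = negQ) : g = -1 := by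
  have h1 : g 0 0 = -1 := congrArg (·.1) h
  have h2 : g 0 1 = 0 := congrArg (·.2.1) h
  have h3 : g 1 0 = 0 := congrArg (·.2.2.1) h
  have h4 : g 1 1 = -1 := congrArg (·.2.2.2) h
  ext i j
  fin_cases i <;> fin_cases j <;>
    simp [h1, h2, h3, h4, Matrix.neg_apply, Matrix.one_apply]

def lv : Fin 4 → (Fin 2 → R3) := ![![1,0], ![0,1], ![1,1], ![1,2]]

def uv : Fin 4 → (Fin 2 → R3) := ![![0,1], ![1,0], ![1,0], ![1,0]]

lemma fx_iff (g : M3) (i : Fin 4) :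
    (∃ c : R3, g.mulVec (lv i) = c • lv i) ↔ fxQ (φ g) i := by
  apply exists_congr; intro c
  fin_cases i <;>
    simp [fxQ, φ, ln, lv, Matrix.mulVec, dotProduct, Fin.sum_univ_two,
      funext_iff, Fin.forall_fin_two, Prod.ext_iff]

lemma det_bridge (g : M3) : detQ (φ g) = g.det := by
  simp [detQ, φ, Matrix.det_fin_two]

set_option synthInstance.maxSize 400 in
set_option maxHeartbeats 4000000 in
set_option maxRecDepth 40000 in
lemma claim2 : ∀ g : Q4, detQ g ≠ 0 → ∀ h : Q4, detQ h ≠ 0 →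
    bfQ (mulQ g g) → bfQ (mulQ h h) → bfQ (mulQ g (mulQ g h)) →
    bfQ (mulQ (mulQ g h) (mulQ g h)) → (FsQ g ∩ FsQ h).Nonempty := by decide

set_option synthInstance.maxSize 400 in
set_option maxHeartbeats 4000000 in
set_option maxRecDepth 40000 in
lemma claim3 : ∀ g : Q4, mulQ g g = oneQ → ∀ h : Q4, mulQ h h = oneQ →
    ∀ k : Q4, mulQ k k = oneQ →
    bfQ (mulQ (mulQ g h) (mulQ g k)) →
    (FsQ g ∩ FsQ h).Nonempty → (FsQ h ∩ FsQ k).Nonempty → (FsQ g ∩ FsQ k).Nonempty →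
    (FsQ g ∩ FsQ h ∩ FsQ k).Nonempty := by decide

set_option synthInstance.maxSize 400 in
set_option maxHeartbeats 1000000 in
set_option maxRecDepth 10000 in
lemma claim_card : ∀ g : Q4, detQ g ≠ 0 → (FsQ g).card = 2 → mulQ g g = oneQ := by decide

set_option synthInstance.maxSize 400 in
set_option maxHeartbeats 1000000 in
set_option maxRecDepth 10000 in
lemma claimU : ∀ g : Q4, detQ g ≠ 0 → FsQ g = Finset.univ ∨ (FsQ g).card ≤ 2 := by decide

lemma glue (S : Fin 4 → Finset (Fin 4))
    (hmiss : ∀ i, i ∉ S i)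
    (hpair : ∀ i j, (S i ∩ S j).Nonempty)
    (htrip : ∀ i j k, (S i).card = 2 → (S j).card = 2 → (S k).card = 2 →
      (S i ∩ S j ∩ S k).Nonempty)
    (hsize : ∀ i, S i = Finset.univ ∨ (S i).card ≤ 2) : False := by
  have hne : ∀ i, (S i).Nonempty := by
    intro i
    obtain ⟨x, hx⟩ := hpair i i
    exact ⟨x, (Finset.mem_inter.mp hx).1⟩
  have hcard : ∀ i, (S i).card = 2 := by
    intro i
    have h2 : (S i).card ≤ 2 := by
      rcases hsize i with h | h
      · exact absurd (h ▸ Finset.mem_univ i) (hmiss i)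
      · exact h
    have h1 : 1 ≤ (S i).card := Finset.Nonempty.card_pos (hne i)
    by_contra hc
    have hone : (S i).card = 1 := by omega
    obtain ⟨x, hxe⟩ := Finset.card_eq_one.mp hone
    have hxx : x ∈ S x := by
      obtain ⟨y, hy⟩ := hpair i x
      rw [Finset.mem_inter] at hy
      have : y ∈ ({x} : Finset (Fin 4)) := hxe ▸ hy.1
      rw [Finset.mem_singleton] at this
      exact this ▸ hy.2
    exact hmiss x hxx
  have hnotall : ∀ x : Fin 4, ¬ (∀ j, x ∈ S j) := fun x hx => hmiss x (hx x)
  obtain ⟨x, hx⟩ := htrip 0 1 2 (hcard 0) (hcard 1) (hcard 2)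
  obtain ⟨y, hy⟩ := htrip 0 1 3 (hcard 0) (hcard 1) (hcard 3)
  obtain ⟨z, hz⟩ := htrip 0 2 3 (hcard 0) (hcard 2) (hcard 3)
  simp only [Finset.mem_inter] at hx hy hz
  have hx3 : x ∉ S 3 := by
    intro h
    exact hnotall x (by intro j; fin_cases j <;> tauto)
  have hy2 : y ∉ S 2 := by
    intro h
    exact hnotall y (by intro j; fin_cases j <;> tauto)
  have hxy : x ≠ y := fun h => hx3 (h ▸ hy.2)
  have hzx : z ≠ x := fun h => hx3 (h ▸ hz.2)
  have hzy : z ≠ y := fun h => hy2 (h ▸ hz.1.2)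
  have hsub : ({z, x, y} : Finset (Fin 4)) ⊆ S 0 := by
    intro w hw
    simp only [Finset.mem_insert, Finset.mem_singleton] at hw
    rcases hw with rfl | rfl | rfl
    · exact hz.1.1
    · exact hx.1.1
    · exact hy.1.1
  have hc3 : ({z, x, y} : Finset (Fin 4)).card = 3 := by
    rw [Finset.card_insert_of_notMem (by simp [hzx, hzy]),
      Finset.card_insert_of_notMem (by simp [hxy]), Finset.card_singleton]
  have := Finset.card_le_card hsub
  rw [hc3, hcard 0] at this
  omega

end Stmt9Aux

open Stmt9Aux in
/-- If `H ≤ GL₂(𝔽₃)` acts irreducibly on `(𝔽₃)²`, then `H` contains the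
scalar matrix `-1` (a nontrivial homothety). -/
theorem stmt9 (H : Subgroup (Matrix (Fin 2) (Fin 2) (ZMod 3))ˣ)
    (hirr : ∀ W : Submodule (ZMod 3) (Fin 2 → ZMod 3),
      (∀ g ∈ H, ∀ v ∈ W, Matrix.mulVec (g : Matrix (Fin 2) (Fin 2) (ZMod 3)) v ∈ W) →
      W = ⊥ ∨ W = ⊤) :
    (-1 : (Matrix (Fin 2) (Fin 2) (ZMod 3))ˣ) ∈ H := by
  by_contra hne
  have hne1 : ∀ g : M3ˣ, g ∈ H → φ (↑g) ≠ negQ := by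
    intro g hg hc
    have hgm : (↑g : M3) = -1 := φ_neg _ hc
    have : g = -1 := Units.ext (by rw [hgm, Units.val_neg, Units.val_one])
    exact hne (this ▸ hg)
  have bfH : ∀ g : M3ˣ, g ∈ H → bfQ (φ ↑g) := by
    intro g hg
    refine ⟨hne1 g hg, ?_⟩
    rw [φu_mul]
    exact hne1 (g*g) (mul_mem hg hg)
  have hdet : ∀ g : M3ˣ, detQ (φ ↑g) ≠ 0 := by
    intro g
    rw [det_bridge]
    exact ((Matrix.isUnit_iff_isUnit_det _).mp g.isUnit).ne_zero
  have hfix : ∃ i : Fin 4, ∀ g : M3ˣ, g ∈ H → fxQ (φ ↑g) i := by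
    by_contra hnofix
    push_neg at hnofix
    choose u hu hnf using hnofix
    have hpair : ∀ i j : Fin 4, (FsQ (φ ↑(u i)) ∩ FsQ (φ ↑(u j))).Nonempty := by
      intro i j
      refine claim2 _ (hdet _) _ (hdet _) ?_ ?_ ?_ ?_ <;> simp only [φu_mul]
      · exact bfH _ (mul_mem (hu i) (hu i))
      · exact bfH _ (mul_mem (hu j) (hu j))
      · exact bfH _ (mul_mem (hu i) (mul_mem (hu i) (hu j)))
      · exact bfH _ (mul_mem (mul_mem (hu i) (hu j)) (mul_mem (hu i) (hu j)))
    exact glue (fun i => FsQ (φ ↑(u i)))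
      (by
        intro i
        simp only [FsQ, Finset.mem_filter, Finset.mem_univ, true_and]
        exact hnf i)
      hpair
      (by
        intro i j k hci hcj hck
        refine claim3 _ (claim_card _ (hdet _) hci) _ (claim_card _ (hdet _) hcj)
          _ (claim_card _ (hdet _) hck) ?_ (hpair i j) (hpair j k) (hpair i k)
        simp only [φu_mul]
        exact bfH _ (mul_mem (mul_mem (hu i) (hu j)) (mul_mem (hu i) (hu k))))
      (fun i => claimU _ (hdet _))
  obtain ⟨i, hi⟩ := hfix
  have hWinv : ∀ g ∈ H, ∀ v ∈ Submodule.span R3 {lv i},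
      Matrix.mulVec (g : M3) v ∈ Submodule.span R3 {lv i} := by
    intro g hg v hv
    rw [Submodule.mem_span_singleton] at hv
    obtain ⟨a, rfl⟩ := hv
    rw [Matrix.mulVec_smul]
    apply Submodule.smul_mem
    obtain ⟨c, hc⟩ := (fx_iff (↑g) i).mpr (hi g hg)
    rw [hc]
    exact Submodule.smul_mem _ _ (Submodule.mem_span_singleton_self _)
  rcases hirr _ hWinv with h | h
  · have : lv i ∈ (⊥ : Submodule R3 (Fin 2 → R3)) := h ▸ Submodule.mem_span_singleton_self _
    rw [Submodule.mem_bot] at this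
    exact (by decide : ∀ j : Fin 4, lv j ≠ 0) i this
  · have huv : uv i ∈ Submodule.span R3 {lv i} := by rw [h]; trivial
    rw [Submodule.mem_span_singleton] at huv
    exact (by decide : ∀ j : Fin 4, ¬ ∃ a : R3, a • lv j = uv j) i huv
end

section
/- Let p be an odd prime, k a finite field of characteristic p, V a 2-dimensional k-vector space, and H a subgroup of GL(V) such that V is an irreducible k[H]-module. Then the following are equivalent: (a) for every 𝔽_p[H]-submodule W ⊆ End_k(V) (i.e., every additive subgroup stable under the conjugation action of H), Hom_{𝔽_p}(W, V)^H = 0; (b) Hom_{𝔽_p}(End_k^0(V), V)^H = 0, where End_k^0(V) denotes the k-subspace of trace-zero endomorphisms. -/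
/-!
(a) ⇒ (b) is the case `W = End⁰(V)`. For (b) ⇒ (a) the point is that `End⁰(V)` is a semisimple
`𝔽_p[H]`-module. Since `p` is odd, the trace form `(A, B) ↦ tr (A B)` is a nondegenerate
`H`-invariant form on `End⁰(V)`, and no minimal `H`-stable subspace is totally isotropic: it would
be a line `k A` with `A² = 0`, and then `ker A` is an `H`-stable line in `V`. Hence the orthogonal
of the sum of the minimal `H`-stable subspaces is zero, and `End⁰(V)` is a semisimple
`k[H]`-module. A simple `k[H]`-module is the sum of its simple `𝔽_p[H]`-submodules, because
`k`-multiples of a simple `𝔽_p[H]`-submodule are again simple. So `W ∩ End⁰(V)` has an `H`-stable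
complement in `End⁰(V)`, and projecting onto it extends an equivariant `f : W → V` to `End⁰(V)`;
by (b), `f` vanishes on `W ∩ End⁰(V)`. As `h A h⁻¹ - A ∈ W ∩ End⁰(V)`, every `f A` is fixed by
`H`, and `V^H = 0` by irreducibility.
-/

/-- The conjugation action `A ↦ h A h⁻¹` of a linear automorphism `h` on endomorphisms. -/
def conjEnd {k V : Type} [Field k] [AddCommGroup V] [Module k V]
    (h : V ≃ₗ[k] V) (A : Module.End k V) : Module.End k V :=
  (h : V →ₗ[k] V) ∘ₗ A ∘ₗ (h.symm : V →ₗ[k] V)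

open Module Pointwise
open LinearMap (trace)

lemma AddSubgroup.pointwise_smul_ne_bot₀ {k M : Type*} [Field k] [AddCommGroup M] [Module k M]
    {c : k} (hc : c ≠ 0) {T : AddSubgroup M} (hT : T ≠ ⊥) : c • T ≠ ⊥ := by
  obtain ⟨x, hx, hx0⟩ := T.bot_or_exists_ne_zero.resolve_left hT
  intro hbot
  have hcx := AddSubgroup.smul_mem_pointwise_smul x c T hx
  rw [hbot, AddSubgroup.mem_bot] at hcx
  exact smul_ne_zero hc hx0 hcx

lemma LinearMap.BilinForm.two_mul_finrank_le_of_le_orthogonal {k M : Type*} [Field k]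
    [AddCommGroup M] [Module k M] [FiniteDimensional k M] {B : LinearMap.BilinForm k M}
    (hB : B.Nondegenerate) {S : Submodule k M} (hS : S ≤ B.orthogonal S) :
    2 * finrank k S ≤ finrank k M := by
  have := Submodule.finrank_mono hS
  rw [LinearMap.BilinForm.finrank_orthogonal hB] at this
  have := Submodule.finrank_le S
  omega

namespace Representation

section Monoid

variable {k G M : Type*} [Field k] [Monoid G] [AddCommGroup M] [Module k M]
  (ρ : Representation k G M)

/-- The `𝔽_p[G]`-submodules of `M` when `char k = p`. -/
def invtAddSubgroup : Set (AddSubgroup M) :=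
  {W | ∀ g, W ≤ W.comap (ρ g).toAddMonoidHom}

def IsMinimalInvtAddSubgroup (T : AddSubgroup M) : Prop :=
  Minimal (fun T => T ∈ ρ.invtAddSubgroup ∧ T ≠ ⊥) T

def IsMinimalInvtSubmodule (S : Submodule k M) : Prop :=
  Minimal (fun S => S ∈ ρ.invtSubmodule ∧ S ≠ ⊥) S

variable {ρ}

lemma mem_invtSubmodule_iff_forall {S : Submodule k M} :
    S ∈ ρ.invtSubmodule ↔ ∀ g, ∀ x ∈ S, ρ g x ∈ S := by
  simp only [mem_invtSubmodule, Module.End.mem_invtSubmodule_iff_forall_mem_of_mem]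

lemma sSup_mem_invtAddSubgroup {𝒲 : Set (AddSubgroup M)} (h𝒲 : 𝒲 ⊆ ρ.invtAddSubgroup) :
    sSup 𝒲 ∈ ρ.invtAddSubgroup := fun g =>
  sSup_le fun _ hW => (h𝒲 hW g).trans (AddSubgroup.comap_mono (le_sSup hW))

lemma sup_mem_invtAddSubgroup {W C : AddSubgroup M} (hW : W ∈ ρ.invtAddSubgroup)
    (hC : C ∈ ρ.invtAddSubgroup) : W ⊔ C ∈ ρ.invtAddSubgroup := by
  rw [← sSup_pair]
  exact sSup_mem_invtAddSubgroup (Set.insert_subset hW (Set.singleton_subset_iff.mpr hC))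

lemma inf_mem_invtAddSubgroup {W C : AddSubgroup M} (hW : W ∈ ρ.invtAddSubgroup)
    (hC : C ∈ ρ.invtAddSubgroup) : W ⊓ C ∈ ρ.invtAddSubgroup :=
  fun g _ hx => ⟨hW g hx.1, hC g hx.2⟩

lemma smul_mem_invtAddSubgroup {c : k} (hc : c ≠ 0) {T : AddSubgroup M}
    (hT : T ∈ ρ.invtAddSubgroup) : c • T ∈ ρ.invtAddSubgroup := fun g x hx => by
  rw [AddSubgroup.mem_pointwise_smul_iff_inv_smul_mem₀ hc] at hx
  rw [AddSubgroup.mem_comap, AddSubgroup.mem_pointwise_smul_iff_inv_smul_mem₀ hc]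
  simpa using hT g hx

lemma IsMinimalInvtAddSubgroup.le_of_inf_ne_bot {T W : AddSubgroup M}
    (hT : ρ.IsMinimalInvtAddSubgroup T) (hW : W ∈ ρ.invtAddSubgroup) (hTW : T ⊓ W ≠ ⊥) :
    T ≤ W :=
  (hT.le_of_le ⟨inf_mem_invtAddSubgroup hT.prop.1 hW, hTW⟩ inf_le_left).trans inf_le_right

lemma IsMinimalInvtAddSubgroup.smul {c : k} (hc : c ≠ 0) {T : AddSubgroup M}
    (hT : ρ.IsMinimalInvtAddSubgroup T) : ρ.IsMinimalInvtAddSubgroup (c • T) := by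
  refine ⟨⟨smul_mem_invtAddSubgroup hc hT.prop.1, AddSubgroup.pointwise_smul_ne_bot₀ hc hT.prop.2⟩,
    fun U hU hle => ?_⟩
  rw [AddSubgroup.le_pointwise_smul_iff₀ hc] at hle
  rw [AddSubgroup.pointwise_smul_le_iff₀ hc]
  exact hT.le_of_le ⟨smul_mem_invtAddSubgroup (inv_ne_zero hc) hU.1,
    AddSubgroup.pointwise_smul_ne_bot₀ (inv_ne_zero hc) hU.2⟩ hle

lemma smul_mem_sSup_isMinimalInvtAddSubgroup (c : k) {x : M}
    (hx : x ∈ sSup {T | ρ.IsMinimalInvtAddSubgroup T}) :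
    c • x ∈ sSup {T | ρ.IsMinimalInvtAddSubgroup T} := by
  rcases eq_or_ne c 0 with rfl | hc
  · rw [zero_smul]
    exact zero_mem _
  have hle : c • sSup {T | ρ.IsMinimalInvtAddSubgroup T} ≤
      sSup {T | ρ.IsMinimalInvtAddSubgroup T} := by
    rw [AddSubgroup.pointwise_smul_le_iff₀ hc]
    refine sSup_le fun T (hT : ρ.IsMinimalInvtAddSubgroup T) => ?_
    rw [AddSubgroup.le_pointwise_smul_iff₀ (inv_ne_zero hc), inv_inv]
    exact le_sSup (hT.smul hc)
  exact hle (AddSubgroup.smul_mem_pointwise_smul x c _ hx)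

theorem exists_proj_of_isCompl {W C : AddSubgroup M} (hW : W ∈ ρ.invtAddSubgroup)
    (hC : C ∈ ρ.invtAddSubgroup) (hWC : IsCompl W C) :
    ∃ π : M →+ M, (∀ x, π x ∈ W) ∧ (∀ x ∈ W, π x = x) ∧ ∀ g x, π (ρ g x) = ρ g (π x) := by
  have h := AddSubgroup.toIntSubmodule.isCompl hWC
  set π := W.toIntSubmodule.projection C.toIntSubmodule h
  refine ⟨π.toAddMonoidHom, Submodule.projection_apply_mem h,
    fun x hx => Submodule.projection_apply_of_mem_left h hx, fun g x => ?_⟩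
  have hW' : π (ρ g (π x)) = ρ g (π x) :=
    Submodule.projection_apply_of_mem_left h (hW g (Submodule.projection_apply_mem h x))
  have hC' : π (ρ g (x - π x)) = 0 :=
    (Submodule.projection_apply_eq_zero_iff h).mpr (hC g (Submodule.sub_projection_mem h x))
  change π (ρ g x) = ρ g (π x)
  calc π (ρ g x) = π (ρ g (π x)) + π (ρ g (x - π x)) := by
        rw [← map_add, ← map_add, add_sub_cancel]
    _ = ρ g (π x) := by rw [hW', hC', add_zero]

variable [Finite M]

theorem exists_isCompl_invtAddSubgroup
    (hsoc : sSup {T | ρ.IsMinimalInvtAddSubgroup T} = ⊤)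
    {W : AddSubgroup M} (hW : W ∈ ρ.invtAddSubgroup) :
    ∃ C ∈ ρ.invtAddSubgroup, IsCompl W C := by
  obtain ⟨C, -, hCmax⟩ := exists_maximal_ge_of_wellFoundedGT
    (fun C => C ∈ ρ.invtAddSubgroup ∧ Disjoint W C) ⊥
    ⟨sSup_empty (α := AddSubgroup M) ▸ sSup_mem_invtAddSubgroup (Set.empty_subset _),
      disjoint_bot_right⟩
  refine ⟨C, hCmax.prop.1, hCmax.prop.2, codisjoint_iff.mpr (eq_top_iff.mpr ?_)⟩
  rw [← hsoc]
  refine sSup_le fun T (hT : ρ.IsMinimalInvtAddSubgroup T) => ?_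
  by_contra hTWC
  have hdisj : Disjoint (W ⊔ C) T := disjoint_iff.mpr <| by
    by_contra hne
    exact hTWC (hT.le_of_inf_ne_bot (sup_mem_invtAddSubgroup hW hCmax.prop.1)
      (by rwa [inf_comm]))
  have hCT : C ⊔ T ≤ C := hCmax.le_of_ge
    ⟨sup_mem_invtAddSubgroup hCmax.prop.1 hT.prop.1,
      hCmax.prop.2.disjoint_sup_right_of_disjoint_sup_left hdisj⟩ le_sup_left
  exact hTWC (le_sup_of_le_right (le_sup_right.trans hCT))

/-- The socle over the prime field is a `k`-subspace, hence contains every minimal invariant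
`k`-subspace. -/
theorem sSup_isMinimalInvtAddSubgroup_eq_top
    (h : sSup {S | ρ.IsMinimalInvtSubmodule S} = ⊤) :
    sSup {T | ρ.IsMinimalInvtAddSubgroup T} = ⊤ := by
  set soc := sSup {T | ρ.IsMinimalInvtAddSubgroup T}
  let P : Submodule k M :=
    { soc.toAddSubmonoid with
      smul_mem' := fun c _ hx => smul_mem_sSup_isMinimalInvtAddSubgroup c hx }
  have hsoc : soc ∈ ρ.invtAddSubgroup :=
    sSup_mem_invtAddSubgroup fun T (hT : ρ.IsMinimalInvtAddSubgroup T) => hT.prop.1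
  have hP : P ∈ ρ.invtSubmodule := mem_invtSubmodule_iff_forall.mpr fun g x hx => hsoc g hx
  suffices ⊤ ≤ P from eq_top_iff.mpr fun _ _ => this Submodule.mem_top
  rw [← h]
  refine sSup_le fun S (hS : ρ.IsMinimalInvtSubmodule S) => ?_
  obtain ⟨T, hTS, hT⟩ := exists_minimal_le_of_wellFoundedLT
    (fun T => T ∈ ρ.invtAddSubgroup ∧ T ≠ ⊥) S.toAddSubgroup
    ⟨fun g x hx => mem_invtSubmodule_iff_forall.mp hS.prop.1 g x hx, by
      rw [Ne, ← Submodule.bot_toAddSubgroup (R := k), Submodule.toAddSubgroup_inj]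
      exact hS.prop.2⟩
  obtain ⟨x, hx, hx0⟩ := T.bot_or_exists_ne_zero.resolve_left hT.prop.2
  have hSP : S ⊓ P ≠ ⊥ := (Submodule.ne_bot_iff _).mpr
    ⟨x, ⟨hTS hx, le_sSup (s := {T | ρ.IsMinimalInvtAddSubgroup T}) hT hx⟩, hx0⟩
  exact (hS.le_of_le ⟨Sublattice.inf_mem hS.prop.1 hP, hSP⟩ inf_le_left).trans inf_le_right

end Monoid

variable {k G M : Type*} [Field k] [Group G] [AddCommGroup M] [Module k M] [FiniteDimensional k M]
  {ρ : Representation k G M}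

theorem sSup_isMinimalInvtSubmodule_eq_top {B : LinearMap.BilinForm k M}
    (hB : B.Nondegenerate) (hBrefl : B.IsRefl) (hBinv : ∀ g x y, B (ρ g x) (ρ g y) = B x y)
    (hanis : ∀ S, ρ.IsMinimalInvtSubmodule S → ∃ x ∈ S, ∃ y ∈ S, B x y ≠ 0) :
    sSup {S | ρ.IsMinimalInvtSubmodule S} = ⊤ := by
  set soc := sSup {S | ρ.IsMinimalInvtSubmodule S}
  have hsoc : ∀ g, soc ≤ soc.comap (ρ g) := fun g =>
    sSup_le fun S (hS : ρ.IsMinimalInvtSubmodule S) =>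
      (ρ.mem_invtSubmodule.mp hS.prop.1 g).trans (Submodule.comap_mono (le_sSup hS))
  have hperp : B.orthogonal soc ∈ ρ.invtSubmodule :=
    mem_invtSubmodule_iff_forall.mpr fun g y hy x hx => by
      rw [← ρ.self_inv_apply g x, hBinv]
      exact hy _ (hsoc g⁻¹ hx)
  suffices B.orthogonal soc = ⊥ by
    rw [← LinearMap.BilinForm.orthogonal_orthogonal hB hBrefl soc, this,
      LinearMap.BilinForm.orthogonal_bot]
  by_contra hne
  obtain ⟨S, hS_le, hS⟩ := exists_minimal_le_of_wellFoundedLT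
    (fun S => S ∈ ρ.invtSubmodule ∧ S ≠ ⊥) _ ⟨hperp, hne⟩
  obtain ⟨x, hx, y, hy, hxy⟩ := hanis S hS
  exact hxy (hS_le hy x (le_sSup (s := {S | ρ.IsMinimalInvtSubmodule S}) hS hx))

end Representation

lemma Matrix.mul_self_eq_zero_of_trace_eq_zero {k : Type*} [Field k] (h2 : (2 : k) ≠ 0)
    {A : Matrix (Fin 2) (Fin 2) k} (h0 : A.trace = 0) (h1 : (A * A).trace = 0) : A * A = 0 := by
  rw [Matrix.eta_fin_two A] at h0 h1 ⊢
  simp only [Matrix.trace_fin_two_of, Matrix.mul_fin_two] at h0 h1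
  have hdet : A 0 0 * A 0 0 + A 0 1 * A 1 0 = 0 := by
    refine (mul_eq_zero.mp ?_).resolve_left h2
    linear_combination h1 + (A 0 0 - A 1 1) * h0
  rw [Matrix.mul_fin_two]
  ext i j
  fin_cases i <;> fin_cases j <;> simp
  · linear_combination hdet
  · linear_combination A 0 1 * h0
  · linear_combination A 1 0 * h0
  · linear_combination h1 - hdet

section TraceZero

variable {k V : Type} [Field k] [AddCommGroup V] [Module k V]

lemma conjEnd_eq_conj (h : V ≃ₗ[k] V) (A : Module.End k V) : conjEnd h A = h.conj A := rfl

lemma conjEnd_mul (h : V ≃ₗ[k] V) (A B : Module.End k V) :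
    conjEnd h (A * B) = conjEnd h A * conjEnd h B :=
  h.conj_comp B A

lemma trace_conjEnd (h : V ≃ₗ[k] V) (A : Module.End k V) :
    trace k V (conjEnd h A) = trace k V A :=
  LinearMap.trace_conj' A h

noncomputable def traceZeroForm : LinearMap.BilinForm k (LinearMap.ker (trace k V)) :=
  ((LinearMap.mul k (Module.End k V)).compr₂ (trace k V)).compl₁₂
    (LinearMap.ker _).subtype (LinearMap.ker _).subtype

lemma traceZeroForm_apply (A B : LinearMap.ker (trace k V)) :
    traceZeroForm A B = trace k V (A * B) := rfl

lemma traceZeroForm_isRefl :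
    (traceZeroForm : LinearMap.BilinForm k (LinearMap.ker (trace k V))).IsRefl :=
  fun A B h => by rwa [traceZeroForm_apply, LinearMap.trace_mul_comm] at h

namespace Subgroup

variable (H : Subgroup (V ≃ₗ[k] V))

def conjRep : Representation k H (Module.End k V) :=
  let ρ := LinearEquiv.automorphismGroup.toLinearMapMonoidHom.comp H.subtype
  Representation.linHom ρ ρ

noncomputable def traceZeroRep : Representation k H (LinearMap.ker (trace k V)) :=
  H.conjRep.subrepresentation _ fun h A hA => (trace_conjEnd (h : V ≃ₗ[k] V) A).trans hA

lemma coe_traceZeroRep_apply (h : H) (A : LinearMap.ker (trace k V)) :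
    (H.traceZeroRep h A : Module.End k V) = conjEnd h A := rfl

end Subgroup

lemma traceZeroForm_traceZeroRep {H : Subgroup (V ≃ₗ[k] V)} (h : H)
    (A B : LinearMap.ker (trace k V)) :
    traceZeroForm (H.traceZeroRep h A) (H.traceZeroRep h B) = traceZeroForm A B := by
  simp only [traceZeroForm_apply, Subgroup.coe_traceZeroRep_apply, ← conjEnd_mul, trace_conjEnd]

variable [FiniteDimensional k V]

lemma LinearMap.mul_self_eq_zero_of_trace_eq_zero (hdim : finrank k V = 2) (h2 : (2 : k) ≠ 0)
    {A : Module.End k V} (h0 : trace k V A = 0) (h1 : trace k V (A * A) = 0) : A * A = 0 := by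
  let b := Module.finBasisOfFinrankEq k V hdim
  rw [LinearMap.trace_eq_matrix_trace k b] at h0 h1
  rw [LinearMap.toMatrix_mul] at h1
  apply (LinearMap.toMatrix b b).injective
  rw [LinearMap.toMatrix_mul, map_zero]
  exact Matrix.mul_self_eq_zero_of_trace_eq_zero h2 h0 h1

lemma LinearMap.eq_zero_of_forall_trace_mul_eq_zero {A : Module.End k V}
    (h : ∀ B, trace k V (A * B) = 0) : A = 0 := by
  let b := Module.finBasis k V
  apply (LinearMap.toMatrix b b).injective
  rw [map_zero, Matrix.ext_iff_trace_mul_right]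
  intro P
  obtain ⟨B, rfl⟩ := (LinearMap.toMatrix b b).surjective P
  rw [← LinearMap.toMatrix_mul, ← LinearMap.trace_eq_matrix_trace, h, Matrix.zero_mul,
    Matrix.trace_zero]

lemma trace_one_eq_two (hdim : finrank k V = 2) : trace k V 1 = 2 := by
  rw [LinearMap.trace_one, hdim, Nat.cast_ofNat]

lemma finrank_ker_trace_le (hdim : finrank k V = 2) (h2 : (2 : k) ≠ 0) :
    finrank k (LinearMap.ker (trace k V)) ≤ 3 := by
  have hne : LinearMap.ker (trace k V) ≠ ⊤ := fun htop => h2 <| by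
    rw [← trace_one_eq_two hdim, ← LinearMap.mem_ker, htop]
    exact Submodule.mem_top
  have := Submodule.finrank_lt hne
  rw [Module.finrank_linearMap, hdim] at this
  omega

lemma traceZeroForm_nondegenerate (hdim : finrank k V = 2) (h2 : (2 : k) ≠ 0) :
    (traceZeroForm : LinearMap.BilinForm k (LinearMap.ker (trace k V))).Nondegenerate := by
  have hleft : ∀ A : LinearMap.ker (trace k V), (∀ B, traceZeroForm A B = 0) → A = 0 := by
    intro A hA
    refine Subtype.ext (LinearMap.eq_zero_of_forall_trace_mul_eq_zero fun B => ?_)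
    set c := trace k V B / 2
    -- `B - c • 1` has trace zero, and `A` is orthogonal to `1` because `trace A = 0`.
    have hB : B - c • 1 ∈ LinearMap.ker (trace k V) := by
      rw [LinearMap.mem_ker, map_sub, map_smul, trace_one_eq_two hdim, smul_eq_mul,
        div_mul_cancel₀ _ h2, sub_self]
    have := hA ⟨_, hB⟩
    rwa [traceZeroForm_apply, mul_sub, map_sub, mul_smul_comm, mul_one, map_smul,
      LinearMap.mem_ker.mp A.2, smul_zero, sub_zero] at this
  exact ⟨hleft, fun A hA => hleft A fun B => traceZeroForm_isRefl _ _ (hA B)⟩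

end TraceZero

section Irreducible

variable {k V : Type} [Field k] [AddCommGroup V] [Module k V] {H : Subgroup (V ≃ₗ[k] V)}

lemma eq_zero_of_forall_apply_eq_self (hdim : finrank k V = 2)
    (hirr : ∀ W : Submodule k V, (∀ h : H, ∀ v ∈ W, (h : V ≃ₗ[k] V) v ∈ W) → W = ⊥ ∨ W = ⊤)
    {v : V} (hv : ∀ h : H, (h : V ≃ₗ[k] V) v = v) : v = 0 := by
  by_contra hv0
  have hinv : ∀ h : H, ∀ w ∈ k ∙ v, (h : V ≃ₗ[k] V) w ∈ k ∙ v := by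
    intro h w hw
    obtain ⟨c, rfl⟩ := Submodule.mem_span_singleton.mp hw
    rw [map_smul, hv]
    exact Submodule.smul_mem _ c (Submodule.mem_span_singleton_self v)
  rcases hirr (k ∙ v) hinv with hbot | htop
  · exact hv0 (Submodule.span_singleton_eq_bot.mp hbot)
  · have := finrank_span_singleton (K := k) hv0
    rw [htop, finrank_top, hdim] at this
    exact absurd this (by norm_num)

variable [FiniteDimensional k V]

/-- Otherwise `A² = 0`, and `ker A` would be an `H`-stable line. -/
lemma trace_mul_self_ne_zero_of_conjEnd_mem_span (hdim : finrank k V = 2) (h2 : (2 : k) ≠ 0)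
    (hirr : ∀ W : Submodule k V, (∀ h : H, ∀ v ∈ W, (h : V ≃ₗ[k] V) v ∈ W) → W = ⊥ ∨ W = ⊤)
    {A : Module.End k V} (hA : A ≠ 0) (h0 : trace k V A = 0)
    (hline : ∀ h : H, conjEnd h A ∈ k ∙ A) : trace k V (A * A) ≠ 0 := by
  intro h1
  have hsq := LinearMap.mul_self_eq_zero_of_trace_eq_zero hdim h2 h0 h1
  have hker : ∀ h : H, ∀ v ∈ LinearMap.ker A, (h : V ≃ₗ[k] V) v ∈ LinearMap.ker A := by
    intro h v hv
    obtain ⟨c, hc⟩ := Submodule.mem_span_singleton.mp (hline h)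
    have hc0 : c ≠ 0 := by
      rintro rfl
      rw [zero_smul, eq_comm, conjEnd_eq_conj, LinearEquiv.map_eq_zero_iff] at hc
      exact hA hc
    simpa [conjEnd, LinearMap.mem_ker.mp hv, hc0] using congr($hc ((h : V ≃ₗ[k] V) v))
  rcases hirr _ hker with hbot | htop
  · refine hA (LinearMap.ext fun v => ?_)
    have : A v ∈ LinearMap.ker A := by
      rw [LinearMap.mem_ker, ← Module.End.mul_apply, hsq, LinearMap.zero_apply]
    rwa [hbot, Submodule.mem_bot] at this
  · exact hA (LinearMap.ker_eq_top.mp htop)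

lemma exists_traceZeroForm_ne_zero (hdim : finrank k V = 2) (h2 : (2 : k) ≠ 0)
    (hirr : ∀ W : Submodule k V, (∀ h : H, ∀ v ∈ W, (h : V ≃ₗ[k] V) v ∈ W) → W = ⊥ ∨ W = ⊤)
    {S : Submodule k (LinearMap.ker (trace k V))}
    (hS : H.traceZeroRep.IsMinimalInvtSubmodule S) :
    ∃ A ∈ S, ∃ B ∈ S, traceZeroForm A B ≠ 0 := by
  by_contra! hiso
  have hdimS : finrank k S ≤ 1 := by
    have := LinearMap.BilinForm.two_mul_finrank_le_of_le_orthogonal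
      (traceZeroForm_nondegenerate hdim h2) fun B hB A hA => hiso A hA B hB
    have := finrank_ker_trace_le hdim h2
    omega
  obtain ⟨A, hAS, hA0⟩ := (Submodule.ne_bot_iff S).mp hS.prop.2
  have hSA : S = k ∙ A := (Submodule.eq_of_le_of_finrank_le
    ((Submodule.span_singleton_le_iff_mem _ _).mpr hAS)
    (by rwa [finrank_span_singleton hA0])).symm
  refine trace_mul_self_ne_zero_of_conjEnd_mem_span hdim h2 hirr (fun h => hA0 (Subtype.ext h))
    A.2 (fun h => ?_) (hiso A hAS A hAS)
  have := Representation.mem_invtSubmodule_iff_forall.mp hS.prop.1 h A hAS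
  rw [hSA, Submodule.mem_span_singleton] at this
  obtain ⟨c, hc⟩ := this
  exact Submodule.mem_span_singleton.mpr ⟨c, congrArg Subtype.val hc⟩

theorem sSup_traceZeroRep_isMinimalInvtAddSubgroup_eq_top [Finite k]
    (hdim : finrank k V = 2) (h2 : (2 : k) ≠ 0)
    (hirr : ∀ W : Submodule k V, (∀ h : H, ∀ v ∈ W, (h : V ≃ₗ[k] V) v ∈ W) → W = ⊥ ∨ W = ⊤) :
    sSup {T | H.traceZeroRep.IsMinimalInvtAddSubgroup T} = ⊤ :=
  have : Finite (LinearMap.ker (trace k V)) := Module.finite_of_finite k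
  Representation.sSup_isMinimalInvtAddSubgroup_eq_top <|
    Representation.sSup_isMinimalInvtSubmodule_eq_top (traceZeroForm_nondegenerate hdim h2)
      traceZeroForm_isRefl traceZeroForm_traceZeroRep
      fun _ hS => exists_traceZeroForm_ne_zero hdim h2 hirr hS

theorem exists_traceZero_extension [Finite k] (hdim : finrank k V = 2) (h2 : (2 : k) ≠ 0)
    (hirr : ∀ W : Submodule k V, (∀ h : H, ∀ v ∈ W, (h : V ≃ₗ[k] V) v ∈ W) → W = ⊥ ∨ W = ⊤)
    {W : AddSubgroup (Module.End k V)} (hW : ∀ h : H, ∀ A ∈ W, conjEnd (h : V ≃ₗ[k] V) A ∈ W)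
    (f : W →+ V)
    (hf : ∀ (h : H) (A B : W), (B : Module.End k V) = conjEnd h A → f B = (h : V ≃ₗ[k] V) (f A)) :
    ∃ F : LinearMap.ker (trace k V) →+ V,
      (∀ (h : H) (A B : LinearMap.ker (trace k V)),
        (B : Module.End k V) = conjEnd h A → F B = (h : V ≃ₗ[k] V) (F A)) ∧
      ∀ (A : W) (hA : (A : Module.End k V) ∈ LinearMap.ker (trace k V)), F ⟨A, hA⟩ = f A := by
  have : Finite (LinearMap.ker (trace k V)) := Module.finite_of_finite k
  set W₀ := W.comap (LinearMap.ker (trace k V)).subtype.toAddMonoidHom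
  have hW₀ : W₀ ∈ H.traceZeroRep.invtAddSubgroup := fun h A hA => hW h A hA
  obtain ⟨C, hC, hW₀C⟩ := Representation.exists_isCompl_invtAddSubgroup
    (sSup_traceZeroRep_isMinimalInvtAddSubgroup_eq_top hdim h2 hirr) hW₀
  obtain ⟨π, hπW₀, hπ_id, hπ_comm⟩ := Representation.exists_proj_of_isCompl hW₀ hC hW₀C
  let ψ : LinearMap.ker (trace k V) →+ W :=
    ((LinearMap.ker (trace k V)).subtype.toAddMonoidHom.comp π).codRestrict W hπW₀
  refine ⟨f.comp ψ, fun h A B hAB => hf h _ _ ?_, fun A hA => ?_⟩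
  · obtain rfl : B = H.traceZeroRep h A := Subtype.ext hAB
    change ((π (H.traceZeroRep h A) : LinearMap.ker (trace k V)) : Module.End k V) = _
    rw [hπ_comm]
    rfl
  · exact congrArg f (Subtype.ext (congrArg Subtype.val (hπ_id ⟨A, hA⟩ A.2) :))

end Irreducible

theorem stmt11_general {k V : Type} [Field k] [Fintype k] [AddCommGroup V] [Module k V]
    [FiniteDimensional k V]
    (p : ℕ) (hp2 : p ≠ 2) [CharP k p]
    (hdim : Module.finrank k V = 2)
    (H : Subgroup (V ≃ₗ[k] V))
    (hirr : ∀ W : Submodule k V,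
      (∀ h : H, ∀ v ∈ W, (h : V ≃ₗ[k] V) v ∈ W) → W = ⊥ ∨ W = ⊤) :
    (∀ W : AddSubgroup (Module.End k V),
      (∀ h : H, ∀ A ∈ W, conjEnd (h : V ≃ₗ[k] V) A ∈ W) →
      ∀ f : W → V,
        (∀ A B : W, f (A + B) = f A + f B) →
        (∀ (h : H) (A B : W),
          (B : Module.End k V) = conjEnd (h : V ≃ₗ[k] V) (A : Module.End k V) →
          f B = (h : V ≃ₗ[k] V) (f A)) →
        ∀ A : W, f A = 0) ↔
    (∀ f : (LinearMap.ker (LinearMap.trace k V) : Submodule k (Module.End k V)) → V,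
      (∀ A B, f (A + B) = f A + f B) →
      (∀ (h : H)
        (A B : (LinearMap.ker (LinearMap.trace k V) : Submodule k (Module.End k V))),
        (B : Module.End k V) = conjEnd (h : V ≃ₗ[k] V) (A : Module.End k V) →
        f B = (h : V ≃ₗ[k] V) (f A)) →
      ∀ A, f A = 0) := by
  have h2 : (2 : k) ≠ 0 := Ring.two_ne_zero (by rwa [ringChar.eq k p])
  refine ⟨fun ha f hadd hequiv => ha (LinearMap.ker (trace k V)).toAddSubgroup
    (fun h A hA => (H.traceZeroRep h ⟨A, hA⟩).2) f hadd hequiv, fun hb W hW f hadd hequiv A => ?_⟩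
  obtain ⟨F, hFequiv, hFext⟩ :=
    exists_traceZero_extension hdim h2 hirr hW (AddMonoidHom.mk' f hadd) hequiv
  refine eq_zero_of_forall_apply_eq_self hdim hirr fun h => ?_
  set B : W := ⟨conjEnd h A, hW h A A.2⟩
  have hBA : ((B - A : W) : Module.End k V) ∈ LinearMap.ker (trace k V) := by
    simp [B, trace_conjEnd]
  have hfBA := (hFext (B - A) hBA).symm.trans (hb F (map_add F) hFequiv _)
  rw [map_sub, sub_eq_zero] at hfBA
  exact (hequiv h A B rfl).symm.trans hfBA

/-- Let `p` be an odd prime, `k` a finite field of characteristic `p`, `V` a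
`2`-dimensional `k`-vector space and `H ≤ GL(V)` acting irreducibly on `V`.  The following are
equivalent: (a) for every `H`-stable additive subgroup `W ⊆ End_k(V)`, every `H`-equivariant
additive (equivalently, `𝔽_p`-linear) map `W → V` vanishes; (b) every `H`-equivariant additive
map `End_k^0(V) → V` vanishes, where `End_k^0(V)` is the space of trace-zero endomorphisms. -/
theorem stmt11 {k V : Type} [Field k] [Fintype k] [AddCommGroup V] [Module k V]
    [FiniteDimensional k V]
    (p : ℕ) (hp : p.Prime) (hp2 : p ≠ 2) [CharP k p]
    (hdim : Module.finrank k V = 2)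
    (H : Subgroup (V ≃ₗ[k] V))
    (hirr : ∀ W : Submodule k V,
      (∀ h : H, ∀ v ∈ W, (h : V ≃ₗ[k] V) v ∈ W) → W = ⊥ ∨ W = ⊤) :
    (∀ W : AddSubgroup (Module.End k V),
      (∀ h : H, ∀ A ∈ W, conjEnd (h : V ≃ₗ[k] V) A ∈ W) →
      ∀ f : W → V,
        (∀ A B : W, f (A + B) = f A + f B) →
        (∀ (h : H) (A B : W),
          (B : Module.End k V) = conjEnd (h : V ≃ₗ[k] V) (A : Module.End k V) →
          f B = (h : V ≃ₗ[k] V) (f A)) →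
        ∀ A : W, f A = 0) ↔
    (∀ f : (LinearMap.ker (LinearMap.trace k V) : Submodule k (Module.End k V)) → V,
      (∀ A B, f (A + B) = f A + f B) →
      (∀ (h : H)
        (A B : (LinearMap.ker (LinearMap.trace k V) : Submodule k (Module.End k V))),
        (B : Module.End k V) = conjEnd (h : V ≃ₗ[k] V) (A : Module.End k V) →
        f B = (h : V ≃ₗ[k] V) (f A)) →
      ∀ A, f A = 0) :=
  stmt11_general p hp2 hdim H hirr
end

section
/- Let k be a field, V a 2-dimensional k-vector space, and G a subgroup of GL(V) such that det(g − id_V) = 0 for every g ∈ G. Then there exists a 1-dimensional G-stable subspace W ⊆ V such that either G acts trivially on W (every g ∈ G fixes W pointwise) or G acts trivially on the quotient V/W. Equivalently, in a suitable basis of V, G is contained in the matrices with rows (1,*),(0,*) or in the matrices with rows (*,*),(0,1). -/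
open Module

section aux
variable {k V : Type} [Field k] [AddCommGroup V] [Module k V]

lemma det2 (B : Basis (Fin 2) k V) (f : V →ₗ[k] V) :
    LinearMap.det f =
      B.repr (f (B 0)) 0 * B.repr (f (B 1)) 1 - B.repr (f (B 1)) 0 * B.repr (f (B 0)) 1 := by
  rw [← LinearMap.det_toMatrix B f, Matrix.det_fin_two]
  simp [LinearMap.toMatrix_apply]

lemma tr2 (B : Basis (Fin 2) k V) (f : V →ₗ[k] V) :
    LinearMap.trace k V f = B.repr (f (B 0)) 0 + B.repr (f (B 1)) 1 := by
  rw [LinearMap.trace_eq_matrix_trace k B f, Matrix.trace_fin_two]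
  simp [LinearMap.toMatrix_apply]

lemma eig (f : V →ₗ[k] V) (h : LinearMap.det f = 0) : ∃ v, v ≠ 0 ∧ f v = 0 := by
  obtain ⟨v, hv, hv0⟩ := Submodule.exists_mem_ne_zero_of_ne_bot
    (LinearMap.bot_lt_ker_of_det_eq_zero h).ne'
  exact ⟨v, hv0, hv⟩

lemma expand2 (B : Basis (Fin 2) k V) (v : V) :
    v = B.repr v 0 • B 0 + B.repr v 1 • B 1 := by
  have := B.sum_repr v
  rw [Fin.sum_univ_two] at this
  exact this.symm

lemma repr_comb0 (B : Basis (Fin 2) k V) (x y : k) :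
    B.repr (x • B 0 + y • B 1) 0 = x := by
  simp [Basis.repr_self, Finsupp.single_apply]

lemma repr_comb1 (B : Basis (Fin 2) k V) (x y : k) :
    B.repr (x • B 0 + y • B 1) 1 = y := by
  simp [Basis.repr_self, Finsupp.single_apply]

lemma detsub (B : Basis (Fin 2) k V) (h : V ≃ₗ[k] V) :
    LinearMap.det ((h : V →ₗ[k] V) - LinearMap.id) =
      (B.repr (h (B 0)) 0 - 1) * (B.repr (h (B 1)) 1 - 1)
        - B.repr (h (B 1)) 0 * B.repr (h (B 0)) 1 := by
  rw [det2 B]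
  simp [Basis.repr_self, Finsupp.single_apply]

lemma detsub' (B : Basis (Fin 2) k V) (h : V ≃ₗ[k] V) (lam : k) :
    LinearMap.det ((h : V →ₗ[k] V) - lam • LinearMap.id) =
      (B.repr (h (B 0)) 0 - lam) * (B.repr (h (B 1)) 1 - lam)
        - B.repr (h (B 1)) 0 * B.repr (h (B 0)) 1 := by
  rw [det2 B]
  simp [Basis.repr_self, Finsupp.single_apply]

lemma treq (B : Basis (Fin 2) k V) (h : V ≃ₗ[k] V) :
    LinearMap.trace k V (h : V →ₗ[k] V) = B.repr (h (B 0)) 0 + B.repr (h (B 1)) 1 := by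
  rw [tr2 B]; simp

lemma mkB (hd : Module.finrank k V = 2) (v₁ v₂ : V) (h0 : v₁ ≠ 0)
    (hind : ∀ t : k, t • v₁ ≠ v₂) :
    ∃ B : Basis (Fin 2) k V, B 0 = v₁ ∧ B 1 = v₂ := by
  have li : LinearIndependent k ![v₁, v₂] := (LinearIndependent.pair_iff' h0).2 hind
  refine ⟨basisOfLinearIndependentOfCardEqFinrank li (by simp [hd]), ?_, ?_⟩ <;>
    simp [coe_basisOfLinearIndependentOfCardEqFinrank]

end aux

/-- Let `k` be a field, `V` a `2`-dimensional `k`-vector space and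
`G ≤ GL(V)` with `det(g - id) = 0` for all `g ∈ G`.  Then there is a `1`-dimensional
`G`-stable subspace `W ⊆ V` such that `G` acts trivially on `W` or trivially on `V/W`
(the latter expressed as `g v - v ∈ W` for all `g ∈ G`, `v ∈ V`). -/
theorem stmt15 {k V : Type} [Field k] [AddCommGroup V] [Module k V] [FiniteDimensional k V]
    (hdim : Module.finrank k V = 2)
    (G : Subgroup (V ≃ₗ[k] V))
    (hdet : ∀ g ∈ G, LinearMap.det ((g : V →ₗ[k] V) - LinearMap.id) = 0) :
    ∃ W : Submodule k V, Module.finrank k W = 1 ∧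
      (∀ g ∈ G, ∀ w ∈ W, g w ∈ W) ∧
      ((∀ g ∈ G, ∀ w ∈ W, g w = w) ∨ (∀ g ∈ G, ∀ v : V, g v - v ∈ W)) := by
  classical
  have hfix : ∀ g ∈ G, ∃ v, v ≠ 0 ∧ g v = v := by
    intro g hg
    obtain ⟨v, hv0, hv⟩ := eig _ (hdet g hg)
    refine ⟨v, hv0, ?_⟩
    have h1 : (g : V →ₗ[k] V) v - v = 0 := by simpa using hv
    have h2 : (g : V →ₗ[k] V) v = v := by rwa [sub_eq_zero] at h1
    simpa using h2
  by_cases hA : ∃ g₀ ∈ G, LinearMap.trace k V (g₀ : V →ₗ[k] V) ≠ 2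
  · obtain ⟨g₀, hg₀G, htr⟩ := hA
    obtain ⟨v₁, hv₁0, hv₁⟩ := hfix g₀ hg₀G
    set lam : k := LinearMap.trace k V (g₀ : V →ₗ[k] V) - 1 with hlam
    have hlam1 : lam ≠ 1 := by
      intro h
      apply htr
      have : LinearMap.trace k V (g₀ : V →ₗ[k] V) - 1 = 1 := h
      linear_combination this
    have hdetlam : LinearMap.det ((g₀ : V →ₗ[k] V) - lam • LinearMap.id) = 0 := by
      let B0 := Module.finBasisOfFinrankEq k V hdim
      have e1 := hdet g₀ hg₀G
      rw [detsub B0] at e1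
      have hl : lam = B0.repr (g₀ (B0 0)) 0 + B0.repr (g₀ (B0 1)) 1 - 1 := by
        rw [hlam, treq B0]
      rw [detsub' B0, hl]
      linear_combination e1
    obtain ⟨v₂, hv₂0, hv₂'⟩ := eig _ hdetlam
    have hv₂ : g₀ v₂ = lam • v₂ := by
      have h1 : (g₀ : V →ₗ[k] V) v₂ - lam • v₂ = 0 := by simpa using hv₂'
      have h2 := sub_eq_zero.1 h1
      simpa using h2
    have hind : ∀ t : k, t • v₁ ≠ v₂ := by
      intro t ht
      apply hv₂0
      have h1 : g₀ v₂ = v₂ := by rw [← ht, map_smul, hv₁]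
      have h2 : (lam - 1) • v₂ = 0 := by
        rw [sub_smul, one_smul, ← hv₂, h1, sub_self]
      exact (smul_eq_zero.1 h2).resolve_left (sub_ne_zero.2 hlam1)
    obtain ⟨B, hB0, hB1⟩ := mkB hdim v₁ v₂ hv₁0 hind
    have hgB0 : g₀ (B 0) = B 0 := by rw [hB0, hv₁]
    have hgB1 : g₀ (B 1) = lam • B 1 := by rw [hB1, hv₂]
    have key : ∀ h ∈ G, B.repr (h (B 0)) 0 = 1 ∧
        B.repr (h (B 0)) 1 * B.repr (h (B 1)) 0 = 0 := by
      intro h hG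
      have e1 := hdet h hG
      rw [detsub B] at e1
      have hcomp0 : (g₀ * h) (B 0)
          = B.repr (h (B 0)) 0 • B 0 + (lam * B.repr (h (B 0)) 1) • B 1 := by
        show g₀ (h (B 0)) = _
        conv_lhs => rw [expand2 B (h (B 0))]
        rw [map_add, map_smul, map_smul, hgB0, hgB1, smul_smul,
          mul_comm (B.repr (h (B 0)) 1) lam]
      have hcomp1 : (g₀ * h) (B 1)
          = B.repr (h (B 1)) 0 • B 0 + (lam * B.repr (h (B 1)) 1) • B 1 := by
        show g₀ (h (B 1)) = _
        conv_lhs => rw [expand2 B (h (B 1))]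
        rw [map_add, map_smul, map_smul, hgB0, hgB1, smul_smul,
          mul_comm (B.repr (h (B 1)) 1) lam]
      have e2 := hdet (g₀ * h) (mul_mem hg₀G hG)
      rw [detsub B, hcomp0, hcomp1, repr_comb0, repr_comb1, repr_comb0, repr_comb1] at e2
      have ha : B.repr (h (B 0)) 0 = 1 := by
        have h3 : (B.repr (h (B 0)) 0 - 1) * (lam - 1) = 0 := by
          linear_combination e2 - lam * e1
        rcases mul_eq_zero.1 h3 with h4 | h4
        · exact sub_eq_zero.1 h4
        · exact absurd (sub_eq_zero.1 h4) hlam1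
      refine ⟨ha, ?_⟩
      rw [ha] at e1
      linear_combination -e1
    by_cases hc : ∀ h ∈ G, B.repr (h (B 0)) 1 = 0
    · have hfb : ∀ h ∈ G, h (B 0) = B 0 := by
        intro h hG
        have h1 := expand2 B (h (B 0))
        rw [(key h hG).1, hc h hG] at h1
        simpa using h1
      have hptw : ∀ g ∈ G, ∀ w ∈ Submodule.span k {B 0}, g w = w := by
        intro g hg w hw
        obtain ⟨t, rfl⟩ := Submodule.mem_span_singleton.1 hw
        rw [map_smul, hfb g hg]
      refine ⟨Submodule.span k {B 0}, finrank_span_singleton (B.ne_zero 0), ?_, Or.inl hptw⟩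
      intro g hg w hw
      rw [hptw g hg w hw]; exact hw
    · push_neg at hc
      obtain ⟨h₁, hG₁, hc₁⟩ := hc
      have hb₁ : B.repr (h₁ (B 1)) 0 = 0 :=
        (mul_eq_zero.1 (key h₁ hG₁).2).resolve_left hc₁
      have hball : ∀ h ∈ G, B.repr (h (B 1)) 0 = 0 := by
        intro h₂ hG₂
        by_contra hb₂
        have hc₂ : B.repr (h₂ (B 0)) 1 = 0 :=
          (mul_eq_zero.1 (key h₂ hG₂).2).resolve_right hb₂
        have h20 : h₂ (B 0) = B 0 := by
          have h1 := expand2 B (h₂ (B 0))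
          rw [(key h₂ hG₂).1, hc₂] at h1
          simpa using h1
        have hcompkey := (key (h₁ * h₂) (mul_mem hG₁ hG₂)).2
        have e0 : (h₁ * h₂) (B 0) = h₁ (B 0) := by
          show h₁ (h₂ (B 0)) = _
          rw [h20]
        have e1' : (h₁ * h₂) (B 1)
            = B.repr (h₂ (B 1)) 0 • h₁ (B 0) + B.repr (h₂ (B 1)) 1 • h₁ (B 1) := by
          show h₁ (h₂ (B 1)) = _
          conv_lhs => rw [expand2 B (h₂ (B 1))]
          rw [map_add, map_smul, map_smul]
        rw [e0, e1'] at hcompkey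
        have h5 : B.repr (h₁ (B 0)) 1 *
            (B.repr (h₂ (B 1)) 0 * B.repr (h₁ (B 0)) 0
              + B.repr (h₂ (B 1)) 1 * B.repr (h₁ (B 1)) 0) = 0 := by
          simpa [map_add, map_smul] using hcompkey
        rw [(key h₁ hG₁).1, hb₁, mul_one, mul_zero, add_zero] at h5
        rcases mul_eq_zero.1 h5 with h6 | h6
        · exact hc₁ h6
        · exact hb₂ h6
      have hstab : ∀ g ∈ G, g (B 1) ∈ Submodule.span k ({B 1} : Set V) := by
        intro g hg
        have h1 := expand2 B (g (B 1))
        rw [hball g hg, zero_smul, zero_add] at h1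
        rw [h1]
        exact Submodule.smul_mem _ _ (Submodule.mem_span_singleton_self _)
      refine ⟨Submodule.span k {B 1}, finrank_span_singleton (B.ne_zero 1), ?_, Or.inr ?_⟩
      · intro g hg w hw
        obtain ⟨t, rfl⟩ := Submodule.mem_span_singleton.1 hw
        rw [map_smul]
        exact Submodule.smul_mem _ _ (hstab g hg)
      · intro g hg v
        have hgB0' : g (B 0) - B 0 ∈ Submodule.span k ({B 1} : Set V) := by
          have h1 := expand2 B (g (B 0))
          rw [(key g hg).1, one_smul] at h1
          rw [h1, add_sub_cancel_left]
          exact Submodule.smul_mem _ _ (Submodule.mem_span_singleton_self _)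
        have hgB1' : g (B 1) - B 1 ∈ Submodule.span k ({B 1} : Set V) :=
          sub_mem (hstab g hg) (Submodule.mem_span_singleton_self _)
        obtain ⟨x, y, hv⟩ : ∃ x y : k, v = x • B 0 + y • B 1 := ⟨_, _, expand2 B v⟩
        rw [hv]
        have h2 : g (x • B 0 + y • B 1) - (x • B 0 + y • B 1)
            = x • (g (B 0) - B 0) + y • (g (B 1) - B 1) := by
          rw [map_add, map_smul, map_smul, smul_sub, smul_sub]
          abel
        rw [h2]
        exact add_mem (Submodule.smul_mem _ _ hgB0') (Submodule.smul_mem _ _ hgB1')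
  · push_neg at hA
    by_cases htriv : ∀ g ∈ G, ∀ v : V, g v = v
    · let B0 := Module.finBasisOfFinrankEq k V hdim
      refine ⟨Submodule.span k {B0 0}, finrank_span_singleton (B0.ne_zero 0), ?_, Or.inl ?_⟩
      · intro g hg w hw
        rw [htriv g hg w]; exact hw
      · intro g hg w _
        exact htriv g hg w
    · push_neg at htriv
      obtain ⟨g₀, hg₀G, w₀, hw₀⟩ := htriv
      obtain ⟨v₁, hv₁0, hv₁⟩ := hfix g₀ hg₀G
      have hall : ∀ h ∈ G, h v₁ = v₁ := by
        intro h hG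
        by_contra hne
        obtain ⟨u, hu0, hu⟩ := hfix h hG
        have hind : ∀ t : k, t • v₁ ≠ u := by
          intro t ht
          have ht0 : t ≠ 0 := by
            rintro rfl
            rw [zero_smul] at ht
            exact hu0 ht.symm
          apply hne
          have h1 : h (t • v₁) = t • v₁ := by rw [ht, hu]
          rw [map_smul] at h1
          exact smul_right_injective V ht0 h1
        obtain ⟨C, hC0, hC1⟩ := mkB hdim v₁ u hv₁0 hind
        have hgC0 : g₀ (C 0) = C 0 := by rw [hC0, hv₁]
        have hhC1 : h (C 1) = C 1 := by rw [hC1, hu]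
        have rg00 : C.repr (g₀ (C 0)) 0 = 1 := by
          rw [hgC0]; simp [Basis.repr_self]
        have rg01 : C.repr (g₀ (C 0)) 1 = 0 := by
          rw [hgC0]; simp [Basis.repr_self, Finsupp.single_apply]
        have rg11 : C.repr (g₀ (C 1)) 1 = 1 := by
          have h1 := hA g₀ hg₀G
          rw [treq C, rg00] at h1
          linear_combination h1
        have hβ : C.repr (g₀ (C 1)) 0 ≠ 0 := by
          intro h0
          apply hw₀
          have hg1 : g₀ (C 1) = C 1 := by
            have h1 := expand2 C (g₀ (C 1))
            rw [h0, rg11] at h1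
            simpa using h1
          obtain ⟨x, y, hv⟩ : ∃ x y : k, w₀ = x • C 0 + y • C 1 := ⟨_, _, expand2 C w₀⟩
          rw [hv, map_add, map_smul, map_smul, hgC0, hg1]
        have rh11 : C.repr (h (C 1)) 1 = 1 := by
          rw [hhC1]; simp [Basis.repr_self]
        have rh10 : C.repr (h (C 1)) 0 = 0 := by
          rw [hhC1]; simp [Basis.repr_self, Finsupp.single_apply]
        have rh00 : C.repr (h (C 0)) 0 = 1 := by
          have h1 := hA h hG
          rw [treq C, rh11] at h1
          linear_combination h1
        have hγ : C.repr (h (C 0)) 1 ≠ 0 := by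
          intro h0
          apply hne
          have h1 := expand2 C (h (C 0))
          rw [rh00, h0] at h1
          rw [← hC0]
          simpa using h1
        have hcomp := hA (g₀ * h) (mul_mem hg₀G hG)
        rw [treq C] at hcomp
        have ec0 : (g₀ * h) (C 0)
            = (1 + C.repr (h (C 0)) 1 * C.repr (g₀ (C 1)) 0) • C 0
              + C.repr (h (C 0)) 1 • C 1 := by
          show g₀ (h (C 0)) = _
          conv_lhs => rw [expand2 C (h (C 0))]
          rw [rh00, map_add, map_smul, map_smul, hgC0]
          conv_lhs => rw [expand2 C (g₀ (C 1))]
          rw [rg11]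
          rw [one_smul, one_smul, smul_add, smul_smul, add_smul, one_smul]
          abel
        have ec1 : (g₀ * h) (C 1) = g₀ (C 1) := by
          show g₀ (h (C 1)) = _
          rw [hhC1]
        rw [ec0, ec1, repr_comb0, rg11] at hcomp
        have h7 : C.repr (h (C 0)) 1 * C.repr (g₀ (C 1)) 0 = 0 := by
          linear_combination hcomp
        rcases mul_eq_zero.1 h7 with h8 | h8
        · exact hγ h8
        · exact hβ h8
      refine ⟨Submodule.span k {v₁}, finrank_span_singleton hv₁0, ?_, Or.inl ?_⟩
      · intro g hg w hw
        obtain ⟨t, rfl⟩ := Submodule.mem_span_singleton.1 hw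
        rw [map_smul, hall g hg]
        exact hw
      · intro g hg w hw
        obtain ⟨t, rfl⟩ := Submodule.mem_span_singleton.1 hw
        rw [map_smul, hall g hg]
end

section
/- Let k be a field of characteristic different from 2, V a 2-dimensional k-vector space, and G a subgroup of GL(V) such that Tr(g − id_V) = 0 (equivalently Tr(g) = 2) for every g ∈ G. Then there exists a 1-dimensional G-stable subspace W ⊆ V such that G acts trivially both on W and on V/W. Equivalently, in a suitable basis of V, G is contained in the upper unitriangular matrices with rows (1,*),(0,1). -/
open Matrix LinearMap

private lemma aux_sq_zero {k : Type} [Field k] (hchar : ringChar k ≠ 2)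
    (n : Matrix (Fin 2) (Fin 2) k) (h1 : n.trace = 0) (h2 : (n * n).trace = 0) :
    n * n = 0 := by
  have h2k : (2 : k) ≠ 0 := Ring.two_ne_zero hchar
  rw [Matrix.trace_fin_two] at h1
  rw [Matrix.trace_fin_two] at h2
  simp only [Matrix.mul_apply, Fin.sum_univ_two] at h2
  have key2 : 2 * (n 0 0 * n 0 0 + n 0 1 * n 1 0) = 0 := by
    linear_combination h2 + (n 0 0 - n 1 1) * h1
  have key : n 0 0 * n 0 0 + n 0 1 * n 1 0 = 0 :=
    (mul_eq_zero.mp key2).resolve_left h2k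
  ext i j
  fin_cases i <;> fin_cases j <;>
    simp only [Matrix.mul_apply, Fin.sum_univ_two, Matrix.zero_apply,
      Fin.mk_zero, Fin.mk_one, Fin.isValue]
  · linear_combination key
  · linear_combination n 0 1 * h1
  · linear_combination n 1 0 * h1
  · linear_combination key - (n 0 0 - n 1 1) * h1

private lemma aux_prop {k : Type} [Field k]
    (n m : Matrix (Fin 2) (Fin 2) k) (hn : n.trace = 0) (hm : m.trace = 0)
    (hn2 : n * n = 0) (hm2 : m * m = 0) (hnm : (n * m).trace = 0) (hne : n ≠ 0) :
    ∃ c : k, m = c • n := by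
  rw [Matrix.trace_fin_two] at hn hm
  have e1 : n 0 0 * n 0 0 + n 0 1 * n 1 0 = 0 := by
    have := congrFun (congrFun hn2 0) 0
    simpa [Matrix.mul_apply, Fin.sum_univ_two] using this
  have e2 : m 0 0 * m 0 0 + m 0 1 * m 1 0 = 0 := by
    have := congrFun (congrFun hm2 0) 0
    simpa [Matrix.mul_apply, Fin.sum_univ_two] using this
  have hd : n 1 1 = -n 0 0 := by linear_combination hn
  have hs : m 1 1 = -m 0 0 := by linear_combination hm
  have e3 : 2 * (n 0 0 * m 0 0) + n 0 1 * m 1 0 + n 1 0 * m 0 1 = 0 := by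
    rw [Matrix.trace_fin_two] at hnm
    simp only [Matrix.mul_apply, Fin.sum_univ_two] at hnm
    rw [hd, hs] at hnm
    linear_combination hnm
  by_cases hb : n 0 1 ≠ 0
  · have hsq : (n 0 1 * m 0 0 - n 0 0 * m 0 1) ^ 2 = 0 := by
      linear_combination (m 0 1) ^ 2 * e1 + (n 0 1) ^ 2 * e2 - (n 0 1) * (m 0 1) * e3
    have key : n 0 1 * m 0 0 - n 0 0 * m 0 1 = 0 :=
      pow_eq_zero_iff (n := 2) (by norm_num) |>.mp hsq
    have h5 : n 0 1 * (m 1 0 * n 0 1 - m 0 1 * n 1 0) = 0 := by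
      linear_combination (n 0 1) * e3 - 2 * (n 0 0) * key - 2 * (m 0 1) * e1
    have h6 : m 1 0 * n 0 1 - m 0 1 * n 1 0 = 0 :=
      (mul_eq_zero.mp h5).resolve_left hb
    refine ⟨m 0 1 / n 0 1, ?_⟩
    ext i j
    fin_cases i <;> fin_cases j <;>
      simp only [Matrix.smul_apply, smul_eq_mul, Fin.mk_zero, Fin.mk_one, Fin.isValue]
    · rw [div_mul_eq_mul_div, eq_div_iff hb]; linear_combination key
    · rw [div_mul_cancel₀ _ hb]
    · rw [div_mul_eq_mul_div, eq_div_iff hb]; linear_combination h6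
    · rw [hd, hs, div_mul_eq_mul_div, eq_div_iff hb]; linear_combination -key
  · push_neg at hb
    have ha : n 0 0 = 0 := by
      have h7 : n 0 0 ^ 2 = 0 := by linear_combination e1 - (n 1 0) * hb
      exact pow_eq_zero_iff (n := 2) (by norm_num) |>.mp h7
    have hc : n 1 0 ≠ 0 := by
      intro hc
      apply hne
      ext i j
      fin_cases i <;> fin_cases j <;>
        simp only [Matrix.zero_apply, Fin.mk_zero, Fin.mk_one, Fin.isValue]
      · exact ha
      · exact hb
      · exact hc
      · rw [hd, ha, neg_zero]
    have hq : m 0 1 = 0 := by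
      have h8 : n 1 0 * m 0 1 = 0 := by
        linear_combination e3 - 2 * (m 0 0) * ha - (m 1 0) * hb
      exact (mul_eq_zero.mp h8).resolve_left hc
    have hp : m 0 0 = 0 := by
      have h9 : m 0 0 ^ 2 = 0 := by linear_combination e2 - (m 1 0) * hq
      exact pow_eq_zero_iff (n := 2) (by norm_num) |>.mp h9
    refine ⟨m 1 0 / n 1 0, ?_⟩
    ext i j
    fin_cases i <;> fin_cases j <;>
      simp only [Matrix.smul_apply, smul_eq_mul, Fin.mk_zero, Fin.mk_one, Fin.isValue]
    · rw [hp, ha, mul_zero]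
    · rw [hq, hb, mul_zero]
    · rw [div_mul_cancel₀ _ hc]
    · simp [hd, hs, hp, ha]

/-- Let `k` be a field of characteristic `≠ 2`, `V` a `2`-dimensional
`k`-vector space and `G ≤ GL(V)` with `Tr(g - id) = 0` (equivalently `Tr(g) = 2`) for all
`g ∈ G`.  Then there is a `1`-dimensional `G`-stable subspace `W ⊆ V` on which `G` acts
trivially and such that `G` also acts trivially on `V/W` (expressed as `g v - v ∈ W`). -/
theorem stmt16 {k V : Type} [Field k] [AddCommGroup V] [Module k V] [FiniteDimensional k V]
    (hchar : ringChar k ≠ 2)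
    (hdim : Module.finrank k V = 2)
    (G : Subgroup (V ≃ₗ[k] V))
    (htr : ∀ g ∈ G, LinearMap.trace k V ((g : V →ₗ[k] V) - LinearMap.id) = 0) :
    ∃ W : Submodule k V, Module.finrank k W = 1 ∧
      (∀ g ∈ G, ∀ w ∈ W, g w ∈ W) ∧
      (∀ g ∈ G, ∀ w ∈ W, g w = w) ∧
      (∀ g ∈ G, ∀ v : V, g v - v ∈ W) := by
  classical
  set B := Module.finBasisOfFinrankEq k V hdim with hB
  set e := LinearMap.toMatrixAlgEquiv B with he
  set N : (V ≃ₗ[k] V) → Matrix (Fin 2) (Fin 2) k :=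
    fun g => e ((g : V →ₗ[k] V) - LinearMap.id) with hN
  have htrace : ∀ f : V →ₗ[k] V, LinearMap.trace k V f = (e f).trace := by
    intro f
    rw [he, LinearMap.toMatrixAlgEquiv, AlgEquiv.ofLinearEquiv_apply]
    exact LinearMap.trace_eq_matrix_trace k B f
  have hNtr : ∀ g ∈ G, (N g).trace = 0 := by
    intro g hg
    rw [hN, ← htrace]
    exact htr g hg
  have hid : (LinearMap.id : V →ₗ[k] V) = 1 := rfl
  have hmul : ∀ g h : V ≃ₗ[k] V,
      ((g : V →ₗ[k] V) - 1) * ((h : V →ₗ[k] V) - 1)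
        = (((g * h : V ≃ₗ[k] V) : V →ₗ[k] V) - 1) - ((g : V →ₗ[k] V) - 1)
          - ((h : V →ₗ[k] V) - 1) := by
    intro g h
    rw [LinearEquiv.coe_toLinearMap_mul]
    noncomm_ring
  have hNmultr : ∀ g ∈ G, ∀ h ∈ G, (N g * N h).trace = 0 := by
    intro g hg h hh
    have hkey : N g * N h = N (g * h) - N g - N h := by
      simp only [hN, hid]
      rw [← _root_.map_mul, ← map_sub, ← map_sub, hmul]
    rw [hkey]
    simp only [Matrix.trace_sub, hNtr _ (G.mul_mem hg hh), hNtr _ hg, hNtr _ hh]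
    ring
  have hNsq : ∀ g ∈ G, N g * N g = 0 := fun g hg =>
    aux_sq_zero hchar _ (hNtr g hg) (hNmultr g hg g hg)
  by_cases h0 : ∀ g ∈ G, N g = 0
  · -- G acts trivially; any line works
    have hgid : ∀ g ∈ G, (g : V →ₗ[k] V) = LinearMap.id := by
      intro g hg
      have h1 : (g : V →ₗ[k] V) - LinearMap.id = 0 := by
        apply e.injective
        rw [map_zero]
        exact h0 g hg
      exact sub_eq_zero.mp h1
    have hv : (B 0 : V) ≠ 0 := B.ne_zero 0
    refine ⟨Submodule.span k {B 0}, finrank_span_singleton hv, ?_, ?_, ?_⟩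
    · intro g hg w hw
      have := LinearMap.congr_fun (hgid g hg) w
      simpa using this ▸ hw
    · intro g hg w _
      have := LinearMap.congr_fun (hgid g hg) w
      simpa using this
    · intro g hg v
      have := LinearMap.congr_fun (hgid g hg) v
      simp only [LinearEquiv.coe_coe, LinearMap.id_coe, id_eq] at this
      rw [this, sub_self]
      exact Submodule.zero_mem _
  · push_neg at h0
    obtain ⟨g₀, hg₀, hg₀ne⟩ := h0
    set n₀ : V →ₗ[k] V := (g₀ : V →ₗ[k] V) - LinearMap.id with hn₀
    have hNg₀ : N g₀ = e n₀ := rfl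
    have hn₀ne : n₀ ≠ 0 := by
      intro h
      apply hg₀ne
      rw [hNg₀, h, map_zero]
    have hn₀sq : n₀ * n₀ = 0 := by
      apply e.injective
      rw [_root_.map_mul, map_zero]
      exact hNsq g₀ hg₀
    have hle : LinearMap.range n₀ ≤ LinearMap.ker n₀ := by
      rintro x ⟨y, rfl⟩
      have := LinearMap.congr_fun hn₀sq y
      simpa [Module.End.mul_apply] using this
    have hker : ∀ w ∈ LinearMap.range n₀, n₀ w = 0 := fun w hw =>
      LinearMap.mem_ker.mp (hle hw)
    have hprop : ∀ h ∈ G, ∃ c : k, ((h : V →ₗ[k] V) - LinearMap.id) = c • n₀ := by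
      intro h hh
      obtain ⟨c, hc⟩ := aux_prop (N g₀) (N h) (hNtr _ hg₀) (hNtr _ hh)
        (hNsq _ hg₀) (hNsq _ hh) (hNmultr _ hg₀ _ hh) hg₀ne
      refine ⟨c, e.injective ?_⟩
      rw [_root_.map_smul]
      exact hc
    have hfix : ∀ g ∈ G, ∀ w ∈ LinearMap.range n₀, g w = w := by
      intro g hg w hw
      obtain ⟨c, hc⟩ := hprop g hg
      have h1 := LinearMap.congr_fun hc w
      simp only [LinearMap.sub_apply, LinearEquiv.coe_coe, LinearMap.id_coe, id_eq,
        LinearMap.smul_apply, hker w hw, smul_zero] at h1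
      exact sub_eq_zero.mp h1
    have hrank : Module.finrank k (LinearMap.range n₀) = 1 := by
      have h1 := LinearMap.finrank_range_add_finrank_ker n₀
      rw [hdim] at h1
      have h2 : Module.finrank k (LinearMap.range n₀)
          ≤ Module.finrank k (LinearMap.ker n₀) := Submodule.finrank_mono hle
      have h3 : Module.finrank k (LinearMap.range n₀) ≠ 0 := by
        intro h
        exact hn₀ne (LinearMap.range_eq_bot.mp (Submodule.finrank_eq_zero.mp h))
      omega
    refine ⟨LinearMap.range n₀, hrank, ?_, hfix, ?_⟩
    · intro g hg w hw
      rw [hfix g hg w hw]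
      exact hw
    · intro g hg v
      obtain ⟨c, hc⟩ := hprop g hg
      have h1 := LinearMap.congr_fun hc v
      simp only [LinearMap.sub_apply, LinearEquiv.coe_coe, LinearMap.id_coe, id_eq,
        LinearMap.smul_apply] at h1
      rw [h1]
      exact Submodule.smul_mem _ c (LinearMap.mem_range_self n₀ v)
end
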